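/- Let Θ be a DTAS which self-assembles Q using at most m_b black tile types and m_g gray tile types, and let S be the set of all distinct supertile tile-assignments Q_Θ⟨x,y⟩ for x ∈ [w(P)], y ∈ [h(P)]. Then there exists a DTAS T with |S| tile types which self-assembles P such that for each supertile s ∈ S there is a tile type t_s ∈ T whose north, east, south and west glues equal the corresponding supertile glues s(N), s(E), s(S), s(W), and such that s portrays the color χ(t_s); for incomplete supertiles this holds for the defined glues. -/
import Mathlib


/-- A colored Wang tile with a color and four glues (north, east, south, west). -/
structure Tile (C G : Type) where
  color : C
  north : G
  east : G
  south : G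
  west : G
deriving DecidableEq

/-- A rectilinear tile assembly system: a finite set of tile types together with
an L-shaped seed, given by its north glues (bottom arm) and east glues (left arm). -/
structure RTAS (C G : Type) where
  tiles : Finset (Tile C G)
  seedN : ℕ → G
  seedE : ℕ → G

/-- A tile assignment for the `M × N` rectangle spanned by the seed:
every tile belongs to the system, west/south glues match the east/north glues of the
west/south neighbours, and the seed glues on the boundary. -/
def IsAssignment {C G : Type} (T : RTAS C G) (M N : ℕ) (f : ℕ → ℕ → Tile C G) : Prop :=
  (∀ x < M, ∀ y < N, f x y ∈ T.tiles) ∧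
  (∀ y < N, (f 0 y).west = T.seedE y) ∧
  (∀ x < M, (f x 0).south = T.seedN x) ∧
  (∀ x, x + 1 < M → ∀ y < N, (f (x + 1) y).west = (f x y).east) ∧
  (∀ x < M, ∀ y, y + 1 < N → (f x (y + 1)).south = (f x y).north)

/-- `T` self-assembles the `M × N` pattern `P` if some tile assignment realizes `P`. -/
def SelfAssembles {C G : Type} (T : RTAS C G) (M N : ℕ) (P : ℕ → ℕ → C) : Prop :=
  ∃ f, IsAssignment T M N f ∧ ∀ x < M, ∀ y < N, (f x y).color = P x y

/-- A directed RTAS: distinct tile types differ in their south or west glue. -/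
def DirectedTAS {C G : Type} (T : RTAS C G) : Prop :=
  ∀ t₁ ∈ T.tiles, ∀ t₂ ∈ T.tiles, t₁ ≠ t₂ → t₁.south ≠ t₂.south ∨ t₁.west ≠ t₂.west

/-- The set of colors occurring in the `M × N` pattern `P`. -/
def colorsOf {C : Type} [DecidableEq C] (M N : ℕ) (P : ℕ → ℕ → C) : Finset C :=
  (Finset.range M ×ˢ Finset.range N).image fun q => P q.1 q.2

/-- The named colors used in the subpatterns of the pattern `P_F` of the paper.
`uniq n` are the "unique" filler colors. -/
inductive PColor where
  | orC | plus | minus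
  | Z1 | Z2 | Z3 | Z4
  | aC | bW | bD | cW | cD | dC
  | arrW (w : Fin 2)
  | arrD (w : Fin 2)
  | upW (s : Fin 2)
  | upD (s : Fin 2)
  | gate (i : Fin 4)
  | X (i : Fin 8)
  | Y (i : Fin 8)
  | varW (v : ℕ)
  | negW (v : ℕ)
  | varAux (v : ℕ)
  | varMod (v : ℕ)
  | varModd (v : ℕ)
  | uniq (n : ℕ)
deriving DecidableEq

/-- The `16 × 2` subpattern `p`: eight `2 × 2` blocks, block `i` having colors
`Xᵢ` (bottom-left), `OR` (bottom-right, top-left) and `Yᵢ` (top-right). -/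
def pPat : ℕ → ℕ → PColor := fun x y =>
  if y = 0 then
    if x % 2 = 0 then PColor.X ⟨x / 2 % 8, Nat.mod_lt _ (by norm_num)⟩ else PColor.orC
  else
    if x % 2 = 0 then PColor.orC else PColor.Y ⟨x / 2 % 8, Nat.mod_lt _ (by norm_num)⟩

/-- The `4 × 4` subpatterns `q₁, …, q₄` (index `idx = 0, …, 3`), with west input
`w = idx / 2` and south input `s = idx % 2` feeding an `OR`-colored position. -/
def qPat (idx : Fin 4) : ℕ → ℕ → PColor := fun x y =>
  let wv : Fin 2 := ⟨idx.val / 2, by have := idx.isLt; omega⟩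
  let sv : Fin 2 := ⟨idx.val % 2, Nat.mod_lt _ (by norm_num)⟩
  match x, y with
  | 0, 0 => PColor.Z1
  | 1, 0 => PColor.Z2
  | 2, 0 => PColor.upD sv
  | 3, 0 => PColor.bD
  | 0, 1 => PColor.Z3
  | 1, 1 => PColor.aC
  | 2, 1 => PColor.upW sv
  | 3, 1 => PColor.bW
  | 0, 2 => PColor.arrD wv
  | 1, 2 => PColor.arrW wv
  | 2, 2 => PColor.orC
  | 3, 2 => if idx.val = 0 then PColor.minus else PColor.plus
  | 0, 3 => PColor.cD
  | 1, 3 => PColor.cW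
  | 2, 3 => PColor.gate idx
  | _, _ => PColor.dC

/-- The `6 × 3` subpattern `q₅`: bottom row `a ↑₀ ↑₁ ↑₀ ↑₁ b`, middle row
`→₀ OR OR OR OR +`, top row `c A B C D d`. -/
def q5Pat : ℕ → ℕ → PColor := fun x y =>
  match y, x with
  | 0, 0 => PColor.aC
  | 0, 1 => PColor.upW 0
  | 0, 2 => PColor.upW 1
  | 0, 3 => PColor.upW 0
  | 0, 4 => PColor.upW 1
  | 0, _ => PColor.bW
  | 1, 0 => PColor.arrW 0
  | 1, 5 => PColor.plus
  | 1, _ => PColor.orC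
  | 2, 0 => PColor.cW
  | 2, 1 => PColor.gate 0
  | 2, 2 => PColor.gate 1
  | 2, 3 => PColor.gate 2
  | 2, 4 => PColor.gate 3
  | _, _ => PColor.dC

/-- A literal: a variable index together with its sign (`true` = positive). -/
abbrev Lit := ℕ × Bool

/-- A clause with three literals. -/
abbrev Clause3 := Lit × Lit × Lit

/-- A boolean formula in 3-CNF over the variables `0, …, numVars - 1`. -/
structure CNF3 where
  numVars : ℕ
  clauses : List Clause3
  wf : ∀ cl ∈ clauses, cl.1.1 < numVars ∧ cl.2.1.1 < numVars ∧ cl.2.2.1 < numVars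

/-- Value of a literal under a variable assignment. -/
def litVal (f : ℕ → Bool) (l : Lit) : Bool := if l.2 then f l.1 else ! f l.1

/-- A 3-CNF formula is satisfiable if some assignment makes every clause true. -/
def CNF3.Satisfiable (F : CNF3) : Prop :=
  ∃ f : ℕ → Bool, ∀ cl ∈ F.clauses,
    (litVal f cl.1 || litVal f cl.2.1 || litVal f cl.2.2) = true

/-- The `2 × 2` subpattern `r₁(v)`. -/
def r1Pat (v : ℕ) : ℕ → ℕ → PColor := fun x y =>
  match x, y with
  | 0, 0 => PColor.Z4
  | 1, 0 => PColor.varW v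
  | 0, 1 => PColor.varAux v
  | _, _ => PColor.varMod v

/-- The `2 × 2` subpattern `r₂(v)`. -/
def r2Pat (v : ℕ) : ℕ → ℕ → PColor := fun x y =>
  match x, y with
  | 0, 0 => PColor.Z4
  | 1, 0 => PColor.negW v
  | 0, 1 => PColor.varAux v
  | _, _ => PColor.varModd v

/-- The `4 × 2` subpattern `r₃(v)`: bottom row `a v ¬v b`, top row `→₀ OR OR +`. -/
def r3Pat (v : ℕ) : ℕ → ℕ → PColor := fun x y =>
  match y, x with
  | 0, 0 => PColor.aC
  | 0, 1 => PColor.varW v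
  | 0, 2 => PColor.negW v
  | 0, _ => PColor.bW
  | 1, 0 => PColor.arrW 0
  | 1, 3 => PColor.plus
  | _, _ => PColor.orC

/-- The color of a literal. -/
def litColor (l : Lit) : PColor := if l.2 then PColor.varW l.1 else PColor.negW l.1

/-- The `5 × 2` subpattern `s(C)` for a clause `C = (c₁ ∨ c₂ ∨ c₃)`:
bottom row `a c₁ c₂ c₃ b`, top row `→₀ OR OR OR +`. -/
def sPat (cl : Clause3) : ℕ → ℕ → PColor := fun x y =>
  match y, x with
  | 0, 0 => PColor.aC
  | 0, 1 => litColor cl.1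
  | 0, 2 => litColor cl.2.1
  | 0, 3 => litColor cl.2.2
  | 0, _ => PColor.bW
  | 1, 0 => PColor.arrW 0
  | 1, 4 => PColor.plus
  | _, _ => PColor.orC

/-- A rectangular block: width, height and contents. -/
abbrev PBlock := ℕ × ℕ × (ℕ → ℕ → PColor)

/-- The list of subpatterns of `P_F`: `p`, `q₁, …, q₅`, then `r₁(v), r₂(v), r₃(v)`
for every variable `v`, then `s(C)` for every clause `C`. -/
def blocksOf (F : CNF3) : List PBlock :=
  [(16, 2, pPat), (4, 4, qPat 0), (4, 4, qPat 1), (4, 4, qPat 2), (4, 4, qPat 3),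
    (6, 3, q5Pat)]
    ++ (List.range F.numVars).flatMap
        (fun v => [(2, 2, r1Pat v), (2, 2, r2Pat v), (4, 2, r3Pat v)])
    ++ F.clauses.map (fun cl => (5, 2, sPat cl))

/-- Place the blocks side by side (starting at column `x0`, occupying rows `1, …, h`),
with one column of unique colors before each block and after the last one; all the
remaining positions carry unique colors (`uniq` of the position code). -/
def place : List PBlock → ℕ → ℕ → ℕ → PColor
  | [], _, x, y => PColor.uniq (Nat.pair x y)
  | b :: bs, x0, x, y =>
      if x0 ≤ x ∧ x < x0 + b.1 ∧ 1 ≤ y ∧ y < 1 + b.2.1 then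
        b.2.2 (x - x0) (y - 1)
      else if x < x0 + b.1 + 1 then PColor.uniq (Nat.pair x y)
      else place bs (x0 + b.1 + 1) x y

/-- The pattern `P_F` of the paper, of height `6` and width `45 + 11·|V| + 6·ℓ`. -/
def patF (F : CNF3) : ℕ → ℕ → PColor := fun x y => place (blocksOf F) 1 x y

/-- The width of the pattern `P_F`. -/
def widthF (F : CNF3) : ℕ := 45 + 11 * F.numVars + 6 * F.clauses.length

/-- The three colors black, white, gray. -/
inductive BWG where
  | black | white | gray
deriving DecidableEq

/-- The number of tile types of a given color in a tile assembly system. -/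
def countColor {C G : Type} [DecidableEq C] (T : RTAS C G) (c : C) : ℕ :=
  (T.tiles.filter (fun t => t.color = c)).card

/-- The `ℓ × ℓ` supertile portraying the color `c ∈ [k]` (with `ℓ = 5k + 8`):
white bottom row and left column; gray top row and right column except for one
white position at index `c + 1` of each (the color counters); black interior. -/
def superPat (ℓ c : ℕ) : ℕ → ℕ → BWG := fun x y =>
  if y = 0 then BWG.white
  else if x = 0 then BWG.white
  else if y = ℓ - 1 then (if x = c + 1 then BWG.white else BWG.gray)
  else if x = ℓ - 1 then (if y = c + 1 then BWG.white else BWG.gray)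
  else BWG.black

/-- The black/white/gray pattern `Q` built from the `w × h` pattern `P` with colors
in `[k]`: each position `(x, y)` of `P` is replaced by the `ℓ × ℓ` supertile
portraying `P x y` (supertiles in the bottom row/left column of `P` are
incomplete, lacking their white bottom row/left column), and three gadget rows
and three gadget columns are appended at the top and at the right. -/
def QPat (k w h : ℕ) (P : ℕ → ℕ → ℕ) : ℕ → ℕ → BWG := fun X Y =>
  let ℓ := 5 * k + 8
  if X + 1 < ℓ * w ∧ Y + 1 < ℓ * h then
    superPat ℓ (P ((X + 1) / ℓ) ((Y + 1) / ℓ)) ((X + 1) % ℓ) ((Y + 1) % ℓ)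
  else if X + 1 < ℓ * w then
    -- the three gadget rows
    if Y = ℓ * h then (if X = k then BWG.white else BWG.gray)
    else (if (X + 1) % ℓ = ℓ - 1 then BWG.gray else BWG.black)
  else if Y + 1 < ℓ * h then
    -- the three gadget columns
    if X = ℓ * w then (if Y = k then BWG.white else BWG.gray)
    else (if (Y + 1) % ℓ = ℓ - 1 then BWG.gray else BWG.black)
  else
    -- the top-right 3 × 3 corner
    if X = ℓ * w ∨ Y = ℓ * h then BWG.gray else BWG.black

/-- Width of the pattern `Q`. -/
def QW (k w : ℕ) : ℕ := (5 * k + 8) * w + 2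

/-- Height of the pattern `Q`. -/
def QH (k h : ℕ) : ℕ := (5 * k + 8) * h + 2

/-- `(P, m) ∈ ℐ` (with `m = k + 3`): `P` is, up to an identification `ρ` of its
colors with `[k] = {1, …, k}`, the pattern `P_F` of a 3-CNF formula `F`. -/
def InI (k w h : ℕ) (P : ℕ → ℕ → ℕ) : Prop :=
  ∃ (F : CNF3) (ρ : PColor → ℕ),
    w = widthF F ∧ h = 6 ∧
    Set.BijOn ρ (↑(colorsOf (widthF F) 6 (patF F))) (Set.Icc 1 k) ∧
    ∀ x < w, ∀ y < h, P x y = ρ (patF F x y)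

/-- The tile assignment of the supertile at `(x, y)` of the supertile grid,
as a partial function on inner coordinates: inner position `(i, j)` corresponds
to the global position `(x·ℓ + i - 1, y·ℓ + j - 1)`; positions with `i = 0`
(resp. `j = 0`) exist only if `x ≥ 1` (resp. `y ≥ 1`). -/
def superOpt {G : Type} (ℓ : ℕ) (f : ℕ → ℕ → Tile BWG G) (x y : ℕ) :
    ℕ → ℕ → Option (Tile BWG G) := fun i j =>
  if i < ℓ ∧ j < ℓ ∧ (1 ≤ x ∨ 1 ≤ i) ∧ (1 ≤ y ∨ 1 ≤ j) then
    some (f (x * ℓ + i - 1) (y * ℓ + j - 1))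
  else none

/-- `s(N)`: the north output of a supertile, i.e. the north glue of its tile in
position `C₂` (inner position `(0, ℓ - 1)`); defined for `x ≥ 1`. -/
def stN {G : Type} (ℓ : ℕ) (f : ℕ → ℕ → Tile BWG G) (x y : ℕ) : G :=
  (f (x * ℓ - 1) (y * ℓ + ℓ - 2)).north

/-- `s(E)`: the east output of a supertile, i.e. the east glue of its tile in
position `C₁` (inner position `(ℓ - 1, 0)`); defined for `y ≥ 1`. -/
def stE {G : Type} (ℓ : ℕ) (f : ℕ → ℕ → Tile BWG G) (x y : ℕ) : G :=
  (f (x * ℓ + ℓ - 2) (y * ℓ - 1)).east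

/-- `s(S)`: the south input of a supertile, i.e. the south glue of its tile in
position `A` (inner position `(0, 0)`); defined for `x, y ≥ 1`. -/
def stS {G : Type} (ℓ : ℕ) (f : ℕ → ℕ → Tile BWG G) (x y : ℕ) : G :=
  (f (x * ℓ - 1) (y * ℓ - 1)).south

/-- `s(W)`: the west input of a supertile, i.e. the west glue of its tile in
position `A` (inner position `(0, 0)`); defined for `x, y ≥ 1`. -/
def stW {G : Type} (ℓ : ℕ) (f : ℕ → ℕ → Tile BWG G) (x y : ℕ) : G :=
  (f (x * ℓ - 1) (y * ℓ - 1)).west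

namespace STP

open BWG

/-- Bundled context for the core argument. -/
structure Ctx (G₁ : Type) [DecidableEq G₁] where
  k : ℕ
  w : ℕ
  h : ℕ
  P : ℕ → ℕ → ℕ
  Θ : RTAS BWG G₁
  f : ℕ → ℕ → Tile BWG G₁
  hD : DirectedTAS Θ
  hb : countColor Θ BWG.black ≤ 1
  hg : countColor Θ BWG.gray ≤ 2 * k + 3
  hmem : ∀ X < QW k w, ∀ Y < QH k h, f X Y ∈ Θ.tiles
  hWadj : ∀ X, X + 1 < QW k w → ∀ Y < QH k h, (f (X + 1) Y).west = (f X Y).east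
  hSadj : ∀ X < QW k w, ∀ Y, Y + 1 < QH k h → (f X (Y + 1)).south = (f X Y).north
  hcol : ∀ X < QW k w, ∀ Y < QH k h, (f X Y).color = QPat k w h P X Y
  hk : 2 ≤ k
  hw : 1 ≤ w
  hh : 1 ≤ h
  hP1 : ∀ x < w, ∀ y < h, 1 ≤ P x y
  hPk : ∀ x < w, ∀ y < h, P x y ≤ k
  hsurj : ∃ x y, x < w ∧ y < h ∧ P x y = k

namespace Ctx

variable {G₁ : Type} [DecidableEq G₁] (C : Ctx G₁)

/-- The supertile size. -/
def L : ℕ := 5 * C.k + 8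

lemma hL : 18 ≤ C.L := by have := C.hk; simp only [L]; omega

lemma QWe : QW C.k C.w = C.w * C.L + 2 := by
  show (5 * C.k + 8) * C.w + 2 = C.w * C.L + 2
  rw [Nat.mul_comm]; rfl

lemma QHe : QH C.k C.h = C.h * C.L + 2 := by
  show (5 * C.k + 8) * C.h + 2 = C.h * C.L + 2
  rw [Nat.mul_comm]; rfl

lemma le_mul (x : ℕ) (hx : 1 ≤ x) : C.L ≤ x * C.L :=
  Nat.le_mul_of_pos_left C.L hx

lemma mul_le {x w : ℕ} (hx : x < w) : x * C.L + C.L ≤ w * C.L := by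
  have h1 : (x + 1) * C.L ≤ w * C.L := Nat.mul_le_mul_right C.L hx
  have h2 : (x + 1) * C.L = x * C.L + C.L := by rw [Nat.add_mul, Nat.one_mul]
  omega

/-- coordinate decomposition facts -/
lemma coordX {x i : ℕ} (hi : i < C.L) (hxi : 1 ≤ x ∨ 1 ≤ i) :
    (x * C.L + i - 1) + 1 = i + x * C.L := by
  rcases hxi with hx | hi1
  · have := C.le_mul x hx; omega
  · omega

lemma coordMod {i x : ℕ} (hi : i < C.L) : (i + x * C.L) % C.L = i := by
  rw [Nat.add_mul_mod_self_right, Nat.mod_eq_of_lt hi]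

lemma coordDiv {i x : ℕ} (hi : i < C.L) : (i + x * C.L) / C.L = x := by
  rw [Nat.add_mul_div_right _ _ (by have := C.hL; omega), Nat.div_eq_of_lt hi]
  omega

/-- inner-position colors -/
lemma col_inner {x y i j : ℕ} (hx : x < C.w) (hy : y < C.h) (hi : i < C.L) (hj : j < C.L)
    (hxi : 1 ≤ x ∨ 1 ≤ i) (hyj : 1 ≤ y ∨ 1 ≤ j) :
    (C.f (x * C.L + i - 1) (y * C.L + j - 1)).color = superPat C.L (C.P x y) i j := by
  have hL := C.hL
  have e1 := C.coordX hi hxi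
  have e2 := C.coordX hj hyj
  have hXb : x * C.L + i - 1 < QW C.k C.w := by
    rw [C.QWe]; have := C.mul_le hx; omega
  have hYb : y * C.L + j - 1 < QH C.k C.h := by
    rw [C.QHe]; have := C.mul_le hy; omega
  rw [C.hcol _ hXb _ hYb]
  show QPat C.k C.w C.h C.P _ _ = _
  rw [QPat]
  have hcond : (x * C.L + i - 1) + 1 < (5 * C.k + 8) * C.w ∧
      (y * C.L + j - 1) + 1 < (5 * C.k + 8) * C.h := by
    constructor
    · rw [e1]; show i + x * C.L < C.L * C.w
      rw [Nat.mul_comm C.L C.w]; have := C.mul_le hx; omega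
    · rw [e2]; show j + y * C.L < C.L * C.h
      rw [Nat.mul_comm C.L C.h]; have := C.mul_le hy; omega
  rw [if_pos hcond]
  show superPat C.L _ _ _ = _
  rw [e1, e2]
  rw [show (5:ℕ) * C.k + 8 = C.L from rfl] at *
  rw [C.coordMod hi, C.coordMod hj, C.coordDiv hi, C.coordDiv hj]

/-- superPat evaluations -/
lemma sp_bottom (c i : ℕ) : superPat C.L c i 0 = BWG.white := by
  simp [superPat]

lemma sp_left (c j : ℕ) (hj : j ≠ 0) (hj2 : j ≠ C.L - 1) : superPat C.L c 0 j = BWG.white := by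
  have := C.hL; simp [superPat, hj, hj2]

lemma sp_left' (c j : ℕ) (hj : j ≠ 0) : superPat C.L c 0 j = BWG.white := by
  have := C.hL
  by_cases h2 : j = C.L - 1
  · subst h2; simp [superPat]
  · exact C.sp_left c j hj h2

lemma sp_top (c i : ℕ) (hi : 1 ≤ i) :
    superPat C.L c i (C.L - 1) = if i = c + 1 then BWG.white else BWG.gray := by
  have := C.hL
  rw [superPat]
  rw [if_neg (by omega), if_neg (by omega), if_pos rfl]

lemma sp_right (c j : ℕ) (hj : 1 ≤ j) (hj2 : j ≤ C.L - 2) :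
    superPat C.L c (C.L - 1) j = if j = c + 1 then BWG.white else BWG.gray := by
  have := C.hL
  rw [superPat]
  rw [if_neg (by omega), if_neg (by omega), if_neg (by omega), if_pos rfl]

lemma sp_black (c i j : ℕ) (hi : 1 ≤ i) (hi2 : i ≤ C.L - 2) (hj : 1 ≤ j) (hj2 : j ≤ C.L - 2) :
    superPat C.L c i j = BWG.black := by
  have := C.hL
  rw [superPat]
  rw [if_neg (by omega), if_neg (by omega), if_neg (by omega), if_neg (by omega)]

end Ctx

end STP
namespace STP
namespace Ctx

variable {G₁ : Type} [DecidableEq G₁] (C : Ctx G₁)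

/-- uniqueness of tiles with given south and west glue -/
lemma uniq2 {t₁ t₂ : Tile BWG G₁} (h₁ : t₁ ∈ C.Θ.tiles) (h₂ : t₂ ∈ C.Θ.tiles)
    (hs : t₁.south = t₂.south) (hw : t₁.west = t₂.west) : t₁ = t₂ := by
  by_contra hne
  rcases C.hD t₁ h₁ t₂ h₂ hne with h | h
  · exact h hs
  · exact h hw

/-- the unique black tile -/
def B : Tile BWG G₁ := C.f 1 1

def δ : G₁ := C.B.north
def γ : G₁ := C.B.east

lemma fmem {X Y : ℕ} (hX : X < QW C.k C.w) (hY : Y < QH C.k C.h) : C.f X Y ∈ C.Θ.tiles :=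
  C.hmem X hX Y hY

lemma inner_bound {x i : ℕ} (hx : x < C.w) (hi : i < C.L) : x * C.L + i - 1 < QW C.k C.w := by
  rw [C.QWe]; have := C.mul_le hx; omega

lemma inner_boundY {y j : ℕ} (hy : y < C.h) (hj : j < C.L) : y * C.L + j - 1 < QH C.k C.h := by
  rw [C.QHe]; have := C.mul_le hy; omega

lemma B_black : C.B.color = BWG.black := by
  have hL := C.hL
  have hw := C.hw
  have hh := C.hh
  have h11 : (0 * C.L + 2 - 1 : ℕ) = 1 := by omega
  have := C.col_inner (x := 0) (y := 0) (i := 2) (j := 2)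
    (by omega) (by omega) (by omega) (by omega) (Or.inr (by omega)) (Or.inr (by omega))
  rw [h11] at this
  rw [show C.B = C.f 1 1 from rfl, this]
  exact C.sp_black _ 2 2 (by omega) (by omega) (by omega) (by omega)

lemma B_mem : C.B ∈ C.Θ.tiles := by
  have hL := C.hL
  refine C.fmem ?_ ?_ <;> [rw [C.QWe]; rw [C.QHe]] <;>
    [have := C.le_mul C.w C.hw; have := C.le_mul C.h C.hh] <;> omega

/-- any placed black tile is B -/
lemma black_eq {X Y : ℕ} (hX : X < QW C.k C.w) (hY : Y < QH C.k C.h)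
    (hc : (C.f X Y).color = BWG.black) : C.f X Y = C.B := by
  have h1 : C.f X Y ∈ C.Θ.tiles.filter (fun t => t.color = BWG.black) := by
    simp only [Finset.mem_filter]; exact ⟨C.fmem hX hY, hc⟩
  have h2 : C.B ∈ C.Θ.tiles.filter (fun t => t.color = BWG.black) := by
    simp only [Finset.mem_filter]; exact ⟨C.B_mem, C.B_black⟩
  have := Finset.card_le_one.mp C.hb _ h1 _ h2
  exact this

/-- interior adjacent blacks give B.south = δ and B.west = γ -/
lemma inner_black {x y i j : ℕ} (hx : x < C.w) (hy : y < C.h)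
    (hi : 1 ≤ i) (hi2 : i ≤ C.L - 2) (hj : 1 ≤ j) (hj2 : j ≤ C.L - 2) :
    C.f (x * C.L + i - 1) (y * C.L + j - 1) = C.B := by
  have hL := C.hL
  refine C.black_eq (C.inner_bound hx (by omega)) (C.inner_boundY hy (by omega)) ?_
  rw [C.col_inner hx hy (by omega) (by omega) (by omega) (by omega)]
  exact C.sp_black _ i j hi hi2 hj hj2

lemma B_south : C.B.south = C.δ := by
  have hL := C.hL
  have hw := C.hw
  have hh := C.hh
  have h1 : C.f 1 2 = C.B := by
    have := C.inner_black (x := 0) (y := 0) (i := 2) (j := 3)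
      (by omega) (by omega) (by omega) (by omega) (by omega) (by omega)
    simpa [show (0 * C.L + 2 - 1 : ℕ) = 1 by omega, show (0 * C.L + 3 - 1 : ℕ) = 2 by omega]
      using this
  have h2 := C.hSadj 1 (by rw [C.QWe]; have := C.le_mul C.w C.hw; omega) 1
    (by rw [C.QHe]; have := C.le_mul C.h C.hh; omega)
  rw [h1] at h2
  exact h2

lemma B_west : C.B.west = C.γ := by
  have hL := C.hL
  have hw := C.hw
  have hh := C.hh
  have h1 : C.f 2 1 = C.B := by
    have := C.inner_black (x := 0) (y := 0) (i := 3) (j := 2)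
      (by omega) (by omega) (by omega) (by omega) (by omega) (by omega)
    simpa [show (0 * C.L + 3 - 1 : ℕ) = 2 by omega, show (0 * C.L + 2 - 1 : ℕ) = 1 by omega]
      using this
  have h2 := C.hWadj 1 (by rw [C.QWe]; have := C.le_mul C.w C.hw; omega) 1
    (by rw [C.QHe]; have := C.le_mul C.h C.hh; omega)
  rw [h1] at h2
  exact h2

/-- main contradiction tool: a placed non-black tile cannot have south δ and west γ -/
lemma not_B {t : Tile BWG G₁} (ht : t ∈ C.Θ.tiles) (hc : t.color ≠ BWG.black)
    (hs : t.south = C.δ) (hw : t.west = C.γ) : False := by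
  have : t = C.B := C.uniq2 ht C.B_mem (by rw [hs, C.B_south]) (by rw [hw, C.B_west])
  rw [this, C.B_black] at hc
  exact hc rfl

end Ctx
end STP
namespace STP
namespace Ctx

variable {G₁ : Type} [DecidableEq G₁] (C : Ctx G₁)

lemma Lk : (5 * C.k + 8 : ℕ) = C.L := rfl

lemma LW : C.L * C.w = C.w * C.L := Nat.mul_comm _ _
lemma LH : C.L * C.h = C.h * C.L := Nat.mul_comm _ _

lemma basics : C.L = 5 * C.k + 8 ∧ 2 ≤ C.k ∧ C.L ≤ C.w * C.L ∧ C.L ≤ C.L * C.w ∧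
    C.L ≤ C.h * C.L ∧ C.L ≤ C.L * C.h := by
  refine ⟨rfl, C.hk, C.le_mul C.w C.hw, ?_, C.le_mul C.h C.hh, ?_⟩
  · rw [C.LW]; exact C.le_mul C.w C.hw
  · rw [C.LH]; exact C.le_mul C.h C.hh

/-- top row tile of supertile (x,y), inner column i -/
def T (x y i : ℕ) : Tile BWG G₁ := C.f (x * C.L + i - 1) (y * C.L + C.L - 2)
/-- right column tile of supertile (x,y), inner row j -/
def R (x y j : ℕ) : Tile BWG G₁ := C.f (x * C.L + C.L - 2) (y * C.L + j - 1)
/-- gadget row (the all-gray calibrator row) -/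
def G (X : ℕ) : Tile BWG G₁ := C.f X (C.L * C.h)
/-- gadget column -/
def V (Y : ℕ) : Tile BWG G₁ := C.f (C.L * C.w) Y

lemma Garg {a b : ℕ} (hab : a = b) : C.G a = C.G b := by rw [hab]
lemma Varg {a b : ℕ} (hab : a = b) : C.V a = C.V b := by rw [hab]
lemma Targ {x y : ℕ} {a b : ℕ} (hab : a = b) : C.T x y a = C.T x y b := by rw [hab]
lemma Rarg {x y : ℕ} {a b : ℕ} (hab : a = b) : C.R x y a = C.R x y b := by rw [hab]

/- ---------------- gadget color lemmas ---------------- -/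

lemma gcol_rowmid {X : ℕ} (hX : X + 1 < C.L * C.w) :
    (C.f X (C.L * C.h - 1)).color
      = if (X + 1) % C.L = C.L - 1 then BWG.gray else BWG.black := by
  obtain ⟨hL, hk, hw, hw2, hh, hh2⟩ := C.basics
  rw [C.hcol _ (by rw [C.QWe, ← C.LW]; omega) _ (by rw [C.QHe, ← C.LH]; omega)]
  rw [QPat, Lk]
  rw [if_neg (by omega), if_pos hX, if_neg (by omega)]

lemma gcol_row {X : ℕ} (hX : X + 1 < C.L * C.w) :
    (C.f X (C.L * C.h)).color = if X = C.k then BWG.white else BWG.gray := by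
  obtain ⟨hL, hk, hw, hw2, hh, hh2⟩ := C.basics
  rw [C.hcol _ (by rw [C.QWe, ← C.LW]; omega) _ (by rw [C.QHe, ← C.LH]; omega)]
  rw [QPat, Lk]
  rw [if_neg (by omega), if_pos hX, if_pos rfl]

lemma gcol_rowtop {X : ℕ} (hX : X + 1 < C.L * C.w) :
    (C.f X (C.L * C.h + 1)).color
      = if (X + 1) % C.L = C.L - 1 then BWG.gray else BWG.black := by
  obtain ⟨hL, hk, hw, hw2, hh, hh2⟩ := C.basics
  rw [C.hcol _ (by rw [C.QWe, ← C.LW]; omega) _ (by rw [C.QHe, ← C.LH]; omega)]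
  rw [QPat, Lk]
  rw [if_neg (by omega), if_pos hX, if_neg (by omega)]

lemma gcol_colmid {Y : ℕ} (hY : Y + 1 < C.L * C.h) :
    (C.f (C.L * C.w - 1) Y).color
      = if (Y + 1) % C.L = C.L - 1 then BWG.gray else BWG.black := by
  obtain ⟨hL, hk, hw, hw2, hh, hh2⟩ := C.basics
  rw [C.hcol _ (by rw [C.QWe, ← C.LW]; omega) _ (by rw [C.QHe, ← C.LH]; omega)]
  rw [QPat, Lk]
  rw [if_neg (by omega), if_neg (by omega), if_pos hY,
    if_neg (by omega)]

lemma gcol_col {Y : ℕ} (hY : Y + 1 < C.L * C.h) :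
    (C.f (C.L * C.w) Y).color = if Y = C.k then BWG.white else BWG.gray := by
  obtain ⟨hL, hk, hw, hw2, hh, hh2⟩ := C.basics
  rw [C.hcol _ (by rw [C.QWe, ← C.LW]; omega) _ (by rw [C.QHe, ← C.LH]; omega)]
  rw [QPat, Lk]
  rw [if_neg (by omega), if_neg (by omega), if_pos hY, if_pos rfl]

lemma gcol_colout {Y : ℕ} (hY : Y + 1 < C.L * C.h) :
    (C.f (C.L * C.w + 1) Y).color
      = if (Y + 1) % C.L = C.L - 1 then BWG.gray else BWG.black := by
  obtain ⟨hL, hk, hw, hw2, hh, hh2⟩ := C.basics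
  rw [C.hcol _ (by rw [C.QWe, ← C.LW]; omega) _ (by rw [C.QHe, ← C.LH]; omega)]
  rw [QPat, Lk]
  rw [if_neg (by omega), if_neg (by omega), if_pos hY,
    if_neg (by omega)]

/- ---------------- G calibration ---------------- -/

lemma G_mem {a : ℕ} (ha : a ≤ C.L - 3) : C.G a ∈ C.Θ.tiles := by
  obtain ⟨hL, hk, hw, hw2, hh, hh2⟩ := C.basics
  exact C.fmem (by rw [C.QWe]; omega) (by rw [C.QHe, ← C.LH]; omega)

lemma G_color {a : ℕ} (ha : a ≤ C.L - 3) :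
    (C.G a).color = if a = C.k then BWG.white else BWG.gray := by
  obtain ⟨hL, hk, hw, hw2, hh, hh2⟩ := C.basics
  exact C.gcol_row (by omega)

lemma G_gray {a : ℕ} (ha : a ≤ C.L - 3) (hak : a ≠ C.k) : (C.G a).color = BWG.gray := by
  rw [C.G_color ha, if_neg hak]

lemma G_white : (C.G C.k).color = BWG.white := by
  obtain ⟨hL, hk, hw, hw2, hh, hh2⟩ := C.basics
  rw [C.G_color (by omega), if_pos rfl]

lemma G_south {a : ℕ} (ha : a ≤ C.L - 3) : (C.G a).south = C.δ := by
  obtain ⟨hL, hk, hw, hw2, hh, hh2⟩ := C.basics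
  have hb : (C.f a (C.L * C.h - 1)).color = BWG.black := by
    rw [C.gcol_rowmid (by omega), if_neg (by rw [Nat.mod_eq_of_lt (by omega)]; omega)]
  have hB := C.black_eq (X := a) (Y := C.L * C.h - 1)
    (by rw [C.QWe]; omega) (by rw [C.QHe, ← C.LH]; omega) hb
  have := C.hSadj a (by rw [C.QWe]; omega) (C.L * C.h - 1) (by rw [C.QHe, ← C.LH]; omega)
  rw [hB] at this
  have e : C.L * C.h - 1 + 1 = C.L * C.h := by omega
  rw [e] at this
  exact this

lemma G_north {a : ℕ} (ha : a ≤ C.L - 3) : (C.G a).north = C.δ := by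
  obtain ⟨hL, hk, hw, hw2, hh, hh2⟩ := C.basics
  have hb : (C.f a (C.L * C.h + 1)).color = BWG.black := by
    rw [C.gcol_rowtop (by omega), if_neg (by rw [Nat.mod_eq_of_lt (by omega)]; omega)]
  have hB := C.black_eq (X := a) (Y := C.L * C.h + 1)
    (by rw [C.QWe]; omega) (by rw [C.QHe, ← C.LH]; omega) hb
  have := C.hSadj a (by rw [C.QWe]; omega) (C.L * C.h) (by rw [C.QHe, ← C.LH]; omega)
  rw [hB, C.B_south] at this
  exact this.symm

lemma G_west {X : ℕ} (hX : X + 1 ≤ C.L - 2) : (C.G (X + 1)).west = (C.G X).east := by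
  obtain ⟨hL, hk, hw, hw2, hh, hh2⟩ := C.basics
  exact C.hWadj X (by rw [C.QWe]; omega) _ (by rw [C.QHe, ← C.LH]; omega)

/- ---------------- V calibration ---------------- -/

lemma V_mem {b : ℕ} (hb : b ≤ C.L - 3) : C.V b ∈ C.Θ.tiles := by
  obtain ⟨hL, hk, hw, hw2, hh, hh2⟩ := C.basics
  exact C.fmem (by rw [C.QWe, ← C.LW]; omega) (by rw [C.QHe]; omega)

lemma V_color {b : ℕ} (hb : b ≤ C.L - 3) :
    (C.V b).color = if b = C.k then BWG.white else BWG.gray := by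
  obtain ⟨hL, hk, hw, hw2, hh, hh2⟩ := C.basics
  exact C.gcol_col (by omega)

lemma V_gray {b : ℕ} (hb : b ≤ C.L - 3) (hbk : b ≠ C.k) : (C.V b).color = BWG.gray := by
  rw [C.V_color hb, if_neg hbk]

lemma V_white : (C.V C.k).color = BWG.white := by
  obtain ⟨hL, hk, hw, hw2, hh, hh2⟩ := C.basics
  rw [C.V_color (by omega), if_pos rfl]

lemma V_west {b : ℕ} (hb : b ≤ C.L - 3) : (C.V b).west = C.γ := by
  obtain ⟨hL, hk, hw, hw2, hh, hh2⟩ := C.basics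
  have hbl : (C.f (C.L * C.w - 1) b).color = BWG.black := by
    rw [C.gcol_colmid (by omega), if_neg (by rw [Nat.mod_eq_of_lt (by omega)]; omega)]
  have hB := C.black_eq (X := C.L * C.w - 1) (Y := b)
    (by rw [C.QWe, ← C.LW]; omega) (by rw [C.QHe]; omega) hbl
  have := C.hWadj (C.L * C.w - 1) (by rw [C.QWe, ← C.LW]; omega) b (by rw [C.QHe]; omega)
  rw [hB] at this
  have e : C.L * C.w - 1 + 1 = C.L * C.w := by omega
  rw [e] at this
  exact this

lemma V_east {b : ℕ} (hb : b ≤ C.L - 3) : (C.V b).east = C.γ := by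
  obtain ⟨hL, hk, hw, hw2, hh, hh2⟩ := C.basics
  have hbl : (C.f (C.L * C.w + 1) b).color = BWG.black := by
    rw [C.gcol_colout (by omega), if_neg (by rw [Nat.mod_eq_of_lt (by omega)]; omega)]
  have hB := C.black_eq (X := C.L * C.w + 1) (Y := b)
    (by rw [C.QWe, ← C.LW]; omega) (by rw [C.QHe]; omega) hbl
  have := C.hWadj (C.L * C.w) (by rw [C.QWe, ← C.LW]; omega) b (by rw [C.QHe]; omega)
  rw [hB, C.B_west] at this
  exact this.symm

lemma V_succ {Y : ℕ} (hY : Y + 1 ≤ C.L - 2) : (C.V (Y + 1)).south = (C.V Y).north := by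
  obtain ⟨hL, hk, hw, hw2, hh, hh2⟩ := C.basics
  exact C.hSadj _ (by rw [C.QWe, ← C.LW]; omega) _ (by rw [C.QHe]; omega)

end Ctx
end STP
namespace STP
namespace Ctx

variable {G₁ : Type} [DecidableEq G₁] (C : Ctx G₁)

/- ---------------- T (top row) lemmas ---------------- -/

lemma T_mem {x y i : ℕ} (hx : x < C.w) (hy : y < C.h) (hi : i ≤ C.L - 1) :
    C.T x y i ∈ C.Θ.tiles := by
  obtain ⟨hL, hk, hw, hw2, hh, hh2⟩ := C.basics
  refine C.fmem ?_ ?_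
  · rw [C.QWe]; have := C.mul_le hx; omega
  · rw [C.QHe]; have := C.mul_le hy; omega

lemma T_color {x y i : ℕ} (hx : x < C.w) (hy : y < C.h) (hi : 1 ≤ i) (hi2 : i ≤ C.L - 1) :
    (C.T x y i).color = if i = C.P x y + 1 then BWG.white else BWG.gray := by
  obtain ⟨hL, hk, hw, hw2, hh, hh2⟩ := C.basics
  have e : y * C.L + (C.L - 1) - 1 = y * C.L + C.L - 2 := by omega
  have := C.col_inner hx hy (i := i) (j := C.L - 1) (by omega) (by omega)
    (Or.inr hi) (Or.inr (by omega))
  rw [e] at this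
  show (C.f _ _).color = _
  rw [this]
  exact C.sp_top _ i hi

lemma T_gray {x y i : ℕ} (hx : x < C.w) (hy : y < C.h) (hi : 1 ≤ i) (hi2 : i ≤ C.L - 1)
    (hne : i ≠ C.P x y + 1) : (C.T x y i).color = BWG.gray := by
  rw [C.T_color hx hy hi hi2, if_neg hne]

lemma T_white {x y : ℕ} (hx : x < C.w) (hy : y < C.h) :
    (C.T x y (C.P x y + 1)).color = BWG.white := by
  obtain ⟨hL, hk, hw, hw2, hh, hh2⟩ := C.basics
  have hc := C.hPk x hx y hy
  rw [C.T_color hx hy (by omega) (by omega), if_pos rfl]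

lemma T_south {x y i : ℕ} (hx : x < C.w) (hy : y < C.h) (hi : 1 ≤ i) (hi2 : i ≤ C.L - 2) :
    (C.T x y i).south = C.δ := by
  obtain ⟨hL, hk, hw, hw2, hh, hh2⟩ := C.basics
  have hmul := C.mul_le hx
  have hmul2 := C.mul_le hy
  have hbl : C.f (x * C.L + i - 1) (y * C.L + (C.L - 2) - 1) = C.B :=
    C.inner_black hx hy hi hi2 (by omega) (by omega)
  have e : y * C.L + (C.L - 2) - 1 = y * C.L + C.L - 3 := by omega
  rw [e] at hbl
  have := C.hSadj (x * C.L + i - 1) (by rw [C.QWe]; omega)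
    (y * C.L + C.L - 3) (by rw [C.QHe]; omega)
  rw [hbl] at this
  have e2 : y * C.L + C.L - 3 + 1 = y * C.L + C.L - 2 := by omega
  rw [e2] at this
  exact this

lemma T_west {x y i : ℕ} (hx : x < C.w) (hy : y < C.h) (hi : i + 1 ≤ C.L - 1)
    (hxi : 1 ≤ x ∨ 1 ≤ i) : (C.T x y (i + 1)).west = (C.T x y i).east := by
  obtain ⟨hL, hk, hw, hw2, hh, hh2⟩ := C.basics
  have hmul := C.mul_le hx
  have hmul2 := C.mul_le hy
  have h1 : x * C.L + (i + 1) - 1 = (x * C.L + i - 1) + 1 := by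
    rcases hxi with hx1 | hi1
    · have := C.le_mul x hx1; omega
    · omega
  have := C.hWadj (x * C.L + i - 1) (by rw [C.QWe]; omega)
    (y * C.L + C.L - 2) (by rw [C.QHe]; omega)
  show (C.f (x * C.L + (i + 1) - 1) (y * C.L + C.L - 2)).west = (C.T x y i).east
  rw [h1]
  exact this

/- ---------------- R (right column) lemmas ---------------- -/

lemma R_mem {x y j : ℕ} (hx : x < C.w) (hy : y < C.h) (hj : j ≤ C.L - 1) :
    C.R x y j ∈ C.Θ.tiles := by
  obtain ⟨hL, hk, hw, hw2, hh, hh2⟩ := C.basics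
  refine C.fmem ?_ ?_
  · rw [C.QWe]; have := C.mul_le hx; omega
  · rw [C.QHe]; have := C.mul_le hy; omega

lemma R_color {x y j : ℕ} (hx : x < C.w) (hy : y < C.h) (hj : 1 ≤ j) (hj2 : j ≤ C.L - 1) :
    (C.R x y j).color = if j = C.P x y + 1 then BWG.white else BWG.gray := by
  obtain ⟨hL, hk, hw, hw2, hh, hh2⟩ := C.basics
  have e : x * C.L + (C.L - 1) - 1 = x * C.L + C.L - 2 := by omega
  have := C.col_inner hx hy (i := C.L - 1) (j := j) (by omega) (by omega)
    (Or.inr (by omega)) (Or.inr hj)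
  rw [e] at this
  show (C.f _ _).color = _
  rw [this]
  by_cases h2 : j ≤ C.L - 2
  · exact C.sp_right _ j hj h2
  · have hj3 : j = C.L - 1 := by omega
    subst hj3
    exact C.sp_top _ _ (by omega)

lemma R_gray {x y j : ℕ} (hx : x < C.w) (hy : y < C.h) (hj : 1 ≤ j) (hj2 : j ≤ C.L - 1)
    (hne : j ≠ C.P x y + 1) : (C.R x y j).color = BWG.gray := by
  rw [C.R_color hx hy hj hj2, if_neg hne]

lemma R_white {x y : ℕ} (hx : x < C.w) (hy : y < C.h) :
    (C.R x y (C.P x y + 1)).color = BWG.white := by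
  obtain ⟨hL, hk, hw, hw2, hh, hh2⟩ := C.basics
  have hc := C.hPk x hx y hy
  rw [C.R_color hx hy (by omega) (by omega), if_pos rfl]

lemma R_west {x y j : ℕ} (hx : x < C.w) (hy : y < C.h) (hj : 1 ≤ j) (hj2 : j ≤ C.L - 2) :
    (C.R x y j).west = C.γ := by
  obtain ⟨hL, hk, hw, hw2, hh, hh2⟩ := C.basics
  have hmul := C.mul_le hx
  have hmul2 := C.mul_le hy
  have hbl : C.f (x * C.L + (C.L - 2) - 1) (y * C.L + j - 1) = C.B :=
    C.inner_black hx hy (by omega) (by omega) hj hj2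
  have e : x * C.L + (C.L - 2) - 1 = x * C.L + C.L - 3 := by omega
  rw [e] at hbl
  have := C.hWadj (x * C.L + C.L - 3) (by rw [C.QWe]; omega)
    (y * C.L + j - 1) (by rw [C.QHe]; omega)
  rw [hbl] at this
  have e2 : x * C.L + C.L - 3 + 1 = x * C.L + C.L - 2 := by omega
  rw [e2] at this
  exact this

lemma R_succ {x y j : ℕ} (hx : x < C.w) (hy : y < C.h) (hj : j + 1 ≤ C.L - 1)
    (hyj : 1 ≤ y ∨ 1 ≤ j) : (C.R x y (j + 1)).south = (C.R x y j).north := by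
  obtain ⟨hL, hk, hw, hw2, hh, hh2⟩ := C.basics
  have hmul := C.mul_le hx
  have hmul2 := C.mul_le hy
  have h1 : y * C.L + (j + 1) - 1 = (y * C.L + j - 1) + 1 := by
    rcases hyj with hy1 | hj1
    · have := C.le_mul y hy1; omega
    · omega
  have := C.hSadj (x * C.L + C.L - 2) (by rw [C.QWe]; omega)
    (y * C.L + j - 1) (by rw [C.QHe]; omega)
  show (C.f (x * C.L + C.L - 2) (y * C.L + (j + 1) - 1)).south = (C.R x y j).north
  rw [h1]
  exact this

/-- the corner tile, seen from both sides -/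
lemma T_eq_R {x y : ℕ} : C.T x y (C.L - 1) = C.R x y (C.L - 1) := by
  obtain ⟨hL, hk, hw, hw2, hh, hh2⟩ := C.basics
  show C.f _ _ = C.f _ _
  rw [show x * C.L + (C.L - 1) - 1 = x * C.L + C.L - 2 by omega,
    show y * C.L + (C.L - 1) - 1 = y * C.L + C.L - 2 by omega]

end Ctx
end STP
namespace STP
namespace Ctx

variable {G₁ : Type} [DecidableEq G₁] (C : Ctx G₁)

/- ---------------- sync lemmas ---------------- -/

lemma Gsync {a b : ℕ} (hab : C.G a = C.G b) (t : ℕ) :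
    a + t ≤ C.L - 3 → b + t ≤ C.L - 3 → C.G (a + t) = C.G (b + t) := by
  induction t with
  | zero => intro _ _; exact hab
  | succ t ih =>
    intro h1 h2
    obtain ⟨hL, hk, hw, hw2, hh, hh2⟩ := C.basics
    have ihh := ih (by omega) (by omega)
    show C.G (a + t + 1) = C.G (b + t + 1)
    refine C.uniq2 (C.G_mem (by omega)) (C.G_mem (by omega)) ?_ ?_
    · rw [C.G_south (by omega), C.G_south (by omega)]
    · rw [C.G_west (by omega), C.G_west (by omega), ihh]

lemma TGsync {x y i a : ℕ} (hx : x < C.w) (hy : y < C.h) (hi : 1 ≤ i)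
    (hab : C.T x y i = C.G a) (t : ℕ) :
    i + t ≤ C.L - 2 → a + t ≤ C.L - 3 → C.T x y (i + t) = C.G (a + t) := by
  induction t with
  | zero => intro _ _; exact hab
  | succ t ih =>
    intro h1 h2
    obtain ⟨hL, hk, hw, hw2, hh, hh2⟩ := C.basics
    have ihh := ih (by omega) (by omega)
    show C.T x y (i + t + 1) = C.G (a + t + 1)
    refine C.uniq2 (C.T_mem hx hy (by omega)) (C.G_mem (by omega)) ?_ ?_
    · rw [C.T_south hx hy (by omega) (by omega), C.G_south (by omega)]
    · rw [C.T_west hx hy (by omega) (by omega), C.G_west (by omega), ihh]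

lemma Vsync {a b : ℕ} (hab : C.V a = C.V b) (t : ℕ) :
    a + t ≤ C.L - 3 → b + t ≤ C.L - 3 → C.V (a + t) = C.V (b + t) := by
  induction t with
  | zero => intro _ _; exact hab
  | succ t ih =>
    intro h1 h2
    obtain ⟨hL, hk, hw, hw2, hh, hh2⟩ := C.basics
    have ihh := ih (by omega) (by omega)
    show C.V (a + t + 1) = C.V (b + t + 1)
    refine C.uniq2 (C.V_mem (by omega)) (C.V_mem (by omega)) ?_ ?_
    · rw [C.V_succ (by omega), C.V_succ (by omega), ihh]
    · rw [C.V_west (by omega), C.V_west (by omega)]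

lemma RVsync {x y j b : ℕ} (hx : x < C.w) (hy : y < C.h) (hj : 1 ≤ j)
    (hab : C.R x y j = C.V b) (t : ℕ) :
    j + t ≤ C.L - 2 → b + t ≤ C.L - 3 → C.R x y (j + t) = C.V (b + t) := by
  induction t with
  | zero => intro _ _; exact hab
  | succ t ih =>
    intro h1 h2
    obtain ⟨hL, hk, hw, hw2, hh, hh2⟩ := C.basics
    have ihh := ih (by omega) (by omega)
    show C.R x y (j + t + 1) = C.V (b + t + 1)
    refine C.uniq2 (C.R_mem hx hy (by omega)) (C.V_mem (by omega)) ?_ ?_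
    · rw [C.R_succ hx hy (by omega) (by omega), C.V_succ (by omega), ihh]
    · rw [C.R_west hx hy (by omega) (by omega), C.V_west (by omega)]

/- ---------------- distinctness ---------------- -/

end Ctx
lemma bwg_ne : BWG.white ≠ BWG.gray := by simp
namespace Ctx
variable {G₁ : Type} [DecidableEq G₁] (C : Ctx G₁)

lemma G_ne {a b : ℕ} (hab : a < b) (hb : b ≤ C.L - 3) (hb2 : b + (C.k - a) ≤ C.L - 3)
    (ha : a ≤ C.k) : C.G a ≠ C.G b := by
  obtain ⟨hL, hk, hw, hw2, hh, hh2⟩ := C.basics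
  intro h
  have := C.Gsync h (C.k - a) (by omega) (by omega)
  rw [C.Garg (show a + (C.k - a) = C.k by omega)] at this
  have hcol := congrArg Tile.color this
  rw [C.G_white, C.G_gray (by omega) (by omega)] at hcol
  exact bwg_ne hcol

lemma V_ne {a b : ℕ} (hab : a < b) (hb : b ≤ C.L - 3) (hb2 : b + (C.k - a) ≤ C.L - 3)
    (ha : a ≤ C.k) : C.V a ≠ C.V b := by
  obtain ⟨hL, hk, hw, hw2, hh, hh2⟩ := C.basics
  intro h
  have := C.Vsync h (C.k - a) (by omega) (by omega)
  rw [C.Varg (show a + (C.k - a) = C.k by omega)] at this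
  have hcol := congrArg Tile.color this
  rw [C.V_white, C.V_gray (by omega) (by omega)] at hcol
  exact bwg_ne hcol

/-- a gadget-row tile never equals a gadget-column tile -/
lemma GV_ne {a b : ℕ} (ha : a ≤ C.L - 4) (hb : b ≤ C.L - 3) : C.G a ≠ C.V b := by
  obtain ⟨hL, hk, hw, hw2, hh, hh2⟩ := C.basics
  intro h
  refine C.not_B (C.G_mem (a := a + 1) (by omega)) ?_ (C.G_south (by omega)) ?_
  · rw [C.G_color (by omega)]
    split <;> simp
  · rw [C.G_west (by omega), h, C.V_east hb]

/-- G-members have east ≠ γ -/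
lemma G_east_ne {a : ℕ} (ha : a ≤ C.L - 4) : (C.G a).east ≠ C.γ := by
  obtain ⟨hL, hk, hw, hw2, hh, hh2⟩ := C.basics
  intro h
  refine C.not_B (C.G_mem (a := a + 1) (by omega)) ?_ (C.G_south (by omega)) ?_
  · rw [C.G_color (by omega)]; split <;> simp
  · rw [C.G_west (by omega), h]

/-- V-members have north ≠ δ -/
lemma V_north_ne {b : ℕ} (hb : b ≤ C.L - 4) : (C.V b).north ≠ C.δ := by
  obtain ⟨hL, hk, hw, hw2, hh, hh2⟩ := C.basics
  intro h
  refine C.not_B (C.V_mem (b := b + 1) (by omega)) ?_ ?_ (C.V_west (by omega))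
  · rw [C.V_color (by omega)]; split <;> simp
  · rw [C.V_succ (by omega), h]

/- ---------------- the universe of gray tiles and the budget ---------------- -/

def Frow : Finset (Tile BWG G₁) := (Finset.range C.k).image C.G ∪ {C.G (C.k + 1)}
def Fcol : Finset (Tile BWG G₁) := (Finset.range C.k).image C.V ∪ {C.V (C.k + 1)}
def Univ : Finset (Tile BWG G₁) := C.Frow ∪ C.Fcol

lemma mem_Frow {t : Tile BWG G₁} :
    t ∈ C.Frow ↔ (∃ a, (a < C.k ∨ a = C.k + 1) ∧ t = C.G a) := by
  simp only [Frow, Finset.mem_union, Finset.mem_image, Finset.mem_range,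
    Finset.mem_singleton]
  constructor
  · rintro (⟨a, ha, rfl⟩ | rfl)
    · exact ⟨a, Or.inl ha, rfl⟩
    · exact ⟨C.k + 1, Or.inr rfl, rfl⟩
  · rintro ⟨a, (ha | rfl), rfl⟩
    · exact Or.inl ⟨a, ha, rfl⟩
    · exact Or.inr rfl

lemma mem_Fcol {t : Tile BWG G₁} :
    t ∈ C.Fcol ↔ (∃ b, (b < C.k ∨ b = C.k + 1) ∧ t = C.V b) := by
  simp only [Fcol, Finset.mem_union, Finset.mem_image, Finset.mem_range,
    Finset.mem_singleton]
  constructor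
  · rintro (⟨a, ha, rfl⟩ | rfl)
    · exact ⟨a, Or.inl ha, rfl⟩
    · exact ⟨C.k + 1, Or.inr rfl, rfl⟩
  · rintro ⟨a, (ha | rfl), rfl⟩
    · exact Or.inl ⟨a, ha, rfl⟩
    · exact Or.inr rfl

lemma mem_Univ {t : Tile BWG G₁} :
    t ∈ C.Univ ↔ (∃ a, (a < C.k ∨ a = C.k + 1) ∧ t = C.G a) ∨
      (∃ b, (b < C.k ∨ b = C.k + 1) ∧ t = C.V b) := by
  simp only [Univ, Finset.mem_union, C.mem_Frow, C.mem_Fcol]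

lemma mem_Univ' {t : Tile BWG G₁} :
    t ∈ C.Univ ↔ (∃ a, a ≤ C.k + 1 ∧ a ≠ C.k ∧ t = C.G a) ∨
      (∃ b, b ≤ C.k + 1 ∧ b ≠ C.k ∧ t = C.V b) := by
  obtain ⟨hL, hk, hw, hw2, hh, hh2⟩ := C.basics
  rw [C.mem_Univ]
  constructor
  · rintro (⟨a, ha, rfl⟩ | ⟨b, hb, rfl⟩)
    · exact Or.inl ⟨a, by omega, by rcases ha with h | h <;> omega, rfl⟩
    · exact Or.inr ⟨b, by omega, by rcases hb with h | h <;> omega, rfl⟩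
  · rintro (⟨a, ha, ha2, rfl⟩ | ⟨b, hb, hb2, rfl⟩)
    · exact Or.inl ⟨a, by omega, rfl⟩
    · exact Or.inr ⟨b, by omega, rfl⟩

lemma card_Frow : C.Frow.card = C.k + 1 := by
  obtain ⟨hL, hk, hw, hw2, hh, hh2⟩ := C.basics
  rw [Frow, Finset.card_union_of_disjoint, Finset.card_image_of_injOn, Finset.card_range,
    Finset.card_singleton]
  · intro a ha b hb hgab
    simp only [Finset.coe_range, Set.mem_Iio] at ha hb
    by_contra hne
    rcases Nat.lt_or_ge a b with hab | hab
    · exact C.G_ne hab (by omega) (by omega) (by omega) hgab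
    · exact C.G_ne (by omega) (by omega) (by omega) (by omega) hgab.symm
  · simp only [Finset.disjoint_singleton_right, Finset.mem_image, Finset.mem_range]
    rintro ⟨a, ha, hgab⟩
    exact C.G_ne (by omega) (by omega) (by omega) (by omega) hgab

lemma card_Fcol : C.Fcol.card = C.k + 1 := by
  obtain ⟨hL, hk, hw, hw2, hh, hh2⟩ := C.basics
  rw [Fcol, Finset.card_union_of_disjoint, Finset.card_image_of_injOn, Finset.card_range,
    Finset.card_singleton]
  · intro a ha b hb hgab
    simp only [Finset.coe_range, Set.mem_Iio] at ha hb
    by_contra hne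
    rcases Nat.lt_or_ge a b with hab | hab
    · exact C.V_ne hab (by omega) (by omega) (by omega) hgab
    · exact C.V_ne (by omega) (by omega) (by omega) (by omega) hgab.symm
  · simp only [Finset.disjoint_singleton_right, Finset.mem_image, Finset.mem_range]
    rintro ⟨a, ha, hgab⟩
    exact C.V_ne (by omega) (by omega) (by omega) (by omega) hgab

lemma card_Univ : C.Univ.card = 2 * C.k + 2 := by
  obtain ⟨hL, hk, hw, hw2, hh, hh2⟩ := C.basics
  rw [Univ, Finset.card_union_of_disjoint, C.card_Frow, C.card_Fcol]
  · omega
  · rw [Finset.disjoint_left]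
    intro t ht ht'
    rw [C.mem_Frow] at ht
    rw [C.mem_Fcol] at ht'
    obtain ⟨a, ha, rfl⟩ := ht
    obtain ⟨b, hb, hgab⟩ := ht'
    exact C.GV_ne (by omega) (by omega) hgab

lemma Univ_gray {t : Tile BWG G₁} (ht : t ∈ C.Univ) :
    t ∈ C.Θ.tiles ∧ t.color = BWG.gray := by
  obtain ⟨hL, hk, hw, hw2, hh, hh2⟩ := C.basics
  rw [C.mem_Univ] at ht
  rcases ht with ⟨a, ha, rfl⟩ | ⟨b, hb, rfl⟩
  · exact ⟨C.G_mem (by omega), C.G_gray (by omega) (by omega)⟩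
  · exact ⟨C.V_mem (by omega), C.V_gray (by omega) (by omega)⟩

/-- the budget: if a gray tile is outside `Univ`, every gray tile is in `Univ ∪ {q}`. -/
lemma budget {q : Tile BWG G₁} (hq : q ∈ C.Θ.tiles) (hqc : q.color = BWG.gray)
    (hqU : q ∉ C.Univ) {q' : Tile BWG G₁} (hq' : q' ∈ C.Θ.tiles)
    (hq'c : q'.color = BWG.gray) : q' = q ∨ q' ∈ C.Univ := by
  have hsub : insert q C.Univ ⊆ C.Θ.tiles.filter (fun t => t.color = BWG.gray) := by
    intro t ht
    rcases Finset.mem_insert.mp ht with rfl | ht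
    · exact Finset.mem_filter.mpr ⟨hq, hqc⟩
    · exact Finset.mem_filter.mpr (C.Univ_gray ht)
  have hcard : (C.Θ.tiles.filter (fun t => t.color = BWG.gray)).card ≤
      (insert q C.Univ).card := by
    rw [Finset.card_insert_of_notMem hqU, C.card_Univ]
    exact le_trans C.hg (by omega)
  have heq := Finset.eq_of_subset_of_card_le hsub hcard
  have : q' ∈ insert q C.Univ := by
    rw [heq]; exact Finset.mem_filter.mpr ⟨hq', hq'c⟩
  exact Finset.mem_insert.mp this

end Ctx
end STP
namespace STP
namespace Ctx

variable {G₁ : Type} [DecidableEq G₁] (C : Ctx G₁)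

end Ctx
lemma subm {a b : ℕ} (h : 1 ≤ a) : (a - 1) * b = a * b - b := by
  rw [Nat.sub_mul, Nat.one_mul]
namespace Ctx
variable {G₁ : Type} [DecidableEq G₁] (C : Ctx G₁)

/-- the corner of a topmost supertile has north ≠ δ -/
lemma corner_north_ne {x : ℕ} (hx : x < C.w) :
    (C.T x (C.h - 1) (C.L - 1)).north ≠ C.δ := by
  obtain ⟨hL, hk, hw, hw2, hh, hh2⟩ := C.basics
  have hmul := C.mul_le hx
  have hsub := subm (b := C.L) C.hh
  intro hKn
  -- coordinates of the corner
  have ecor : C.T x (C.h - 1) (C.L - 1) = C.f (x * C.L + C.L - 2) (C.h * C.L - 2) := by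
    show C.f _ _ = _
    rw [show x * C.L + (C.L - 1) - 1 = x * C.L + C.L - 2 by omega,
      show (C.h - 1) * C.L + C.L - 2 = C.h * C.L - 2 by omega]
  -- E1 is the gray tile right above the corner
  have hE1c : (C.f (x * C.L + C.L - 2) (C.L * C.h - 1)).color = BWG.gray := by
    rw [C.gcol_rowmid (by rw [C.LW]; omega)]
    rw [show x * C.L + C.L - 2 + 1 = (C.L - 1) + x * C.L by omega, C.coordMod (by omega),
      if_pos rfl]
  -- the tile left of E1 is black
  have hblc : C.f (x * C.L + C.L - 3) (C.L * C.h - 1) = C.B := by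
    refine C.black_eq (by rw [C.QWe]; omega) (by rw [C.QHe, C.LH]; omega) ?_
    rw [C.gcol_rowmid (by rw [C.LW]; omega)]
    rw [show x * C.L + C.L - 3 + 1 = (C.L - 2) + x * C.L by omega, C.coordMod (by omega),
      if_neg (by omega)]
  -- E1.west = γ
  have hE1w : (C.f (x * C.L + C.L - 2) (C.L * C.h - 1)).west = C.γ := by
    have := C.hWadj (x * C.L + C.L - 3) (by rw [C.QWe]; omega)
      (C.L * C.h - 1) (by rw [C.QHe, C.LH]; omega)
    rw [show x * C.L + C.L - 3 + 1 = x * C.L + C.L - 2 by omega, hblc] at this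
    exact this
  -- E1.south = corner.north = δ
  have hE1s : (C.f (x * C.L + C.L - 2) (C.L * C.h - 1)).south = C.δ := by
    have := C.hSadj (x * C.L + C.L - 2) (by rw [C.QWe]; omega)
      (C.h * C.L - 2) (by rw [C.QHe]; omega)
    rw [show C.h * C.L - 2 + 1 = C.L * C.h - 1 by rw [C.LH]; omega] at this
    rw [this, ← ecor]
    exact hKn
  exact C.not_B (C.fmem (by rw [C.QWe]; omega) (by rw [C.QHe, C.LH]; omega))
    (by rw [hE1c]; simp) hE1s hE1w

/-- the corner of a rightmost supertile has east ≠ γ -/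
lemma corner_east_ne {y : ℕ} (hy : y < C.h) :
    (C.T (C.w - 1) y (C.L - 1)).east ≠ C.γ := by
  obtain ⟨hL, hk, hw, hw2, hh, hh2⟩ := C.basics
  have hmul := C.mul_le hy
  have hsub := subm (b := C.L) C.hw
  intro hKe
  have ecor : C.T (C.w - 1) y (C.L - 1) = C.f (C.w * C.L - 2) (y * C.L + C.L - 2) := by
    show C.f _ _ = _
    rw [show (C.w - 1) * C.L + (C.L - 1) - 1 = C.w * C.L - 2 by omega]
  have hE1c : (C.f (C.L * C.w - 1) (y * C.L + C.L - 2)).color = BWG.gray := by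
    rw [C.gcol_colmid (by rw [C.LH]; omega)]
    rw [show y * C.L + C.L - 2 + 1 = (C.L - 1) + y * C.L by omega, C.coordMod (by omega),
      if_pos rfl]
  have hbls : C.f (C.L * C.w - 1) (y * C.L + C.L - 3) = C.B := by
    refine C.black_eq (by rw [C.QWe, C.LW]; omega) (by rw [C.QHe]; omega) ?_
    rw [C.gcol_colmid (by rw [C.LH]; omega)]
    rw [show y * C.L + C.L - 3 + 1 = (C.L - 2) + y * C.L by omega, C.coordMod (by omega),
      if_neg (by omega)]
  have hE1s : (C.f (C.L * C.w - 1) (y * C.L + C.L - 2)).south = C.δ := by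
    have := C.hSadj (C.L * C.w - 1) (by rw [C.QWe, C.LW]; omega)
      (y * C.L + C.L - 3) (by rw [C.QHe]; omega)
    rw [show y * C.L + C.L - 3 + 1 = y * C.L + C.L - 2 by omega, hbls] at this
    exact this
  have hE1w : (C.f (C.L * C.w - 1) (y * C.L + C.L - 2)).west = C.γ := by
    have := C.hWadj (C.w * C.L - 2) (by rw [C.QWe]; omega)
      (y * C.L + C.L - 2) (by rw [C.QHe]; omega)
    rw [show C.w * C.L - 2 + 1 = C.L * C.w - 1 by rw [C.LW]; omega] at this
    rw [this, ← ecor]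
    exact hKe
  exact C.not_B (C.fmem (by rw [C.QWe, C.LW]; omega) (by rw [C.QHe]; omega))
    (by rw [hE1c]; simp) hE1s hE1w

/-- LEMMA R: a gray tile with south δ whose σ-successor is white must be `G (k-1)`,
and the successor is the white counter `G k`. -/
lemma lemR {t n : Tile BWG G₁} (ht : t ∈ C.Θ.tiles) (htc : t.color = BWG.gray)
    (hts : t.south = C.δ) (hn : n ∈ C.Θ.tiles) (hnc : n.color = BWG.white)
    (hns : n.south = C.δ) (hnw : n.west = t.east) :
    t = C.G (C.k - 1) ∧ n = C.G C.k := by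
  obtain ⟨hL, hk, hw, hw2, hh, hh2⟩ := C.basics
  have hteq : t = C.G (C.k - 1) := by
    by_contra htne
    -- step 1 : t ∉ Univ
    have htU : t ∉ C.Univ := by
      rw [C.mem_Univ']
      rintro (⟨a, ha, ha2, rfl⟩ | ⟨b, hb, hb2, rfl⟩)
      · -- t = G a : then n = G (a+1), which is gray unless a = k-1
        have hna : n = C.G (a + 1) := by
          refine C.uniq2 hn (C.G_mem (by omega)) ?_ ?_
          · rw [hns, C.G_south (by omega)]
          · rw [hnw, C.G_west (by omega)]
        have : (C.G (a + 1)).color = BWG.gray := by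
          refine C.G_gray (by omega) ?_
          intro hq
          exact htne (by rw [C.Garg (show a = C.k - 1 by omega)])
        rw [← hna, hnc] at this
        exact bwg_ne this
      · -- t = V b : contradiction with B
        exact C.not_B (C.V_mem (by omega)) (by rw [C.V_gray (by omega) (by omega)]; simp)
          hts (C.V_west (by omega))
    -- abbreviation for budget
    have bud : ∀ {q' : Tile BWG G₁}, q' ∈ C.Θ.tiles → q'.color = BWG.gray →
        q' = t ∨ q' ∈ C.Univ := fun hq' hq'c => C.budget ht htc htU hq' hq'c
    -- the topmost corner
    have hh1 : C.h - 1 < C.h := by have := C.hh; omega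
    have hc0 : 1 ≤ C.P 0 (C.h - 1) ∧ C.P 0 (C.h - 1) ≤ C.k :=
      ⟨C.hP1 0 C.hw _ hh1, C.hPk 0 C.hw _ hh1⟩
    have hKc : (C.T 0 (C.h - 1) (C.L - 1)).color = BWG.gray :=
      C.T_gray C.hw hh1 (by omega) (by omega) (by omega)
    have hKmem := C.T_mem (i := C.L - 1) C.hw hh1 (by omega)
    have hKn := C.corner_north_ne C.hw
    -- Q = T (L-2) has east ≠ γ
    have hQc : (C.T 0 (C.h - 1) (C.L - 2)).color = BWG.gray :=
      C.T_gray C.hw hh1 (by omega) (by omega) (by omega)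
    have hQs := C.T_south C.hw hh1 (i := C.L - 2) (by omega) (by omega)
    have hQmem := C.T_mem (i := C.L - 2) C.hw hh1 (by omega)
    have hQe : (C.T 0 (C.h - 1) (C.L - 2)).east ≠ C.γ := by
      rcases bud hQmem hQc with hq | hq
      · -- Q = t : then t.east = γ would make n = B
        intro he
        refine C.not_B hn (by rw [hnc]; simp) hns ?_
        rw [hnw, ← hq, he]
      · rw [C.mem_Univ'] at hq
        rcases hq with ⟨a, ha, ha2, hqa⟩ | ⟨b, hb, hb2, hqb⟩
        · rw [hqa]; exact C.G_east_ne (by omega)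
        · exact absurd (C.not_B hQmem (by rw [hQc]; simp) hQs
            (by rw [hqb, C.V_west (by omega)])) (by simp)
    -- K.west = Q.east
    have hKw : (C.T 0 (C.h - 1) (C.L - 1)).west = (C.T 0 (C.h - 1) (C.L - 2)).east := by
      have := C.T_west C.hw hh1 (i := C.L - 2) (by omega) (by omega)
      rw [C.Targ (show C.L - 2 + 1 = C.L - 1 by omega)] at this
      exact this
    -- K's membership
    rcases bud hKmem hKc with hK | hK
    · -- K = t : then the tile below K in the right column has north δ, impossible
      have hKs : (C.T 0 (C.h - 1) (C.L - 1)).south = C.δ := by rw [hK]; exact hts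
      have hQ's : (C.R 0 (C.h - 1) (C.L - 2)).north = C.δ := by
        have := C.R_succ C.hw hh1 (j := C.L - 2) (by omega) (by omega)
        rw [C.Rarg (show C.L - 2 + 1 = C.L - 1 by omega), ← C.T_eq_R] at this
        rw [← this]; exact hKs
      have hQ'c : (C.R 0 (C.h - 1) (C.L - 2)).color = BWG.gray :=
        C.R_gray C.hw hh1 (by omega) (by omega) (by omega)
      have hQ'w := C.R_west C.hw hh1 (j := C.L - 2) (by omega) (by omega)
      have hQ'mem := C.R_mem (j := C.L - 2) C.hw hh1 (by omega)
      rcases bud hQ'mem hQ'c with hq | hq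
      · -- Q' = t : t has west γ and south δ
        exact C.not_B ht (by rw [htc]; simp) hts (by rw [← hq]; exact hQ'w)
      · rw [C.mem_Univ'] at hq
        rcases hq with ⟨a, ha, ha2, hqa⟩ | ⟨b, hb, hb2, hqb⟩
        · -- Q' = G a : G has south δ but sits at a west-γ position
          exact C.not_B hQ'mem (by rw [hQ'c]; simp)
            (by rw [hqa]; exact C.G_south (by omega)) hQ'w
        · -- Q' = V b : north ≠ δ
          exact absurd hQ's (by rw [hqb]; exact C.V_north_ne (by omega))
    · rw [C.mem_Univ'] at hK
      rcases hK with ⟨a, ha, ha2, hKa⟩ | ⟨b, hb, hb2, hKb⟩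
      · exact hKn (by rw [hKa]; exact C.G_north (by omega))
      · exact hQe (by rw [← hKw, hKb]; exact C.V_west (by omega))
  refine ⟨hteq, ?_⟩
  refine C.uniq2 hn (C.G_mem (by omega)) ?_ ?_
  · rw [hns, C.G_south (by omega)]
  · rw [hnw, hteq]
    have := C.G_west (X := C.k - 1) (by omega)
    rw [C.Garg (show C.k - 1 + 1 = C.k by omega)] at this
    rw [this]

/-- LEMMA R′ (mirror): a gray tile with west γ whose τ-successor is white must be
`V (k-1)`, with successor the white counter `V k`. -/
lemma lemR' {t n : Tile BWG G₁} (ht : t ∈ C.Θ.tiles) (htc : t.color = BWG.gray)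
    (htw : t.west = C.γ) (hn : n ∈ C.Θ.tiles) (hnc : n.color = BWG.white)
    (hnw : n.west = C.γ) (hns : n.south = t.north) :
    t = C.V (C.k - 1) ∧ n = C.V C.k := by
  obtain ⟨hL, hk, hw, hw2, hh, hh2⟩ := C.basics
  have hteq : t = C.V (C.k - 1) := by
    by_contra htne
    have htU : t ∉ C.Univ := by
      rw [C.mem_Univ']
      rintro (⟨a, ha, ha2, rfl⟩ | ⟨b, hb, hb2, rfl⟩)
      · exact C.not_B (C.G_mem (by omega)) (by rw [C.G_gray (by omega) (by omega)]; simp)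
          (C.G_south (by omega)) htw
      · have hna : n = C.V (b + 1) := by
          refine C.uniq2 hn (C.V_mem (by omega)) ?_ ?_
          · rw [hns, C.V_succ (by omega)]
          · rw [hnw, C.V_west (by omega)]
        have : (C.V (b + 1)).color = BWG.gray := by
          refine C.V_gray (by omega) ?_
          intro hq
          exact htne (by rw [C.Varg (show b = C.k - 1 by omega)])
        rw [← hna, hnc] at this
        exact bwg_ne this
    have bud : ∀ {q' : Tile BWG G₁}, q' ∈ C.Θ.tiles → q'.color = BWG.gray →
        q' = t ∨ q' ∈ C.Univ := fun hq' hq'c => C.budget ht htc htU hq' hq'c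
    have hw1 : C.w - 1 < C.w := by have := C.hw; omega
    have hc0 : 1 ≤ C.P (C.w - 1) 0 ∧ C.P (C.w - 1) 0 ≤ C.k :=
      ⟨C.hP1 _ hw1 0 C.hh, C.hPk _ hw1 0 C.hh⟩
    have hKc : (C.T (C.w - 1) 0 (C.L - 1)).color = BWG.gray :=
      C.T_gray hw1 C.hh (by omega) (by omega) (by omega)
    have hKmem := C.T_mem (i := C.L - 1) hw1 C.hh (by omega)
    have hKe := C.corner_east_ne (y := 0) C.hh
    -- Q' = R (L-2) has north ≠ δ
    have hQ'c : (C.R (C.w - 1) 0 (C.L - 2)).color = BWG.gray :=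
      C.R_gray hw1 C.hh (by omega) (by omega) (by omega)
    have hQ'w := C.R_west hw1 C.hh (j := C.L - 2) (by omega) (by omega)
    have hQ'mem := C.R_mem (j := C.L - 2) hw1 C.hh (by omega)
    have hQ'n : (C.R (C.w - 1) 0 (C.L - 2)).north ≠ C.δ := by
      rcases bud hQ'mem hQ'c with hq | hq
      · -- Q' = t : then n = tile(δ, γ) = B
        intro hd
        refine C.not_B hn (by rw [hnc]; simp) ?_ hnw
        rw [hns, ← hq, hd]
      · rw [C.mem_Univ'] at hq
        rcases hq with ⟨a, ha, ha2, hqa⟩ | ⟨b, hb, hb2, hqb⟩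
        · exact absurd (C.not_B hQ'mem (by rw [hQ'c]; simp)
            (by rw [hqa]; exact C.G_south (by omega)) hQ'w) (by simp)
        · rw [hqb]; exact C.V_north_ne (by omega)
    have hKs : (C.T (C.w - 1) 0 (C.L - 1)).south = (C.R (C.w - 1) 0 (C.L - 2)).north := by
      have := C.R_succ hw1 C.hh (j := C.L - 2) (by omega) (by omega)
      rw [C.Rarg (show C.L - 2 + 1 = C.L - 1 by omega), ← C.T_eq_R] at this
      exact this
    rcases bud hKmem hKc with hK | hK
    · -- K = t : t.west = γ; look at Q = T (L-2)
      have hQc : (C.T (C.w - 1) 0 (C.L - 2)).color = BWG.gray :=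
        C.T_gray hw1 C.hh (by omega) (by omega) (by omega)
      have hQs := C.T_south hw1 C.hh (i := C.L - 2) (by omega) (by omega)
      have hQmem := C.T_mem (i := C.L - 2) hw1 C.hh (by omega)
      have hQe : (C.T (C.w - 1) 0 (C.L - 2)).east = C.γ := by
        have hKw : (C.T (C.w - 1) 0 (C.L - 1)).west
            = (C.T (C.w - 1) 0 (C.L - 2)).east := by
          have := C.T_west hw1 C.hh (i := C.L - 2) (by omega) (by omega)
          rw [C.Targ (show C.L - 2 + 1 = C.L - 1 by omega)] at this
          exact this
        rw [← hKw, hK]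
        exact htw
      rcases bud hQmem hQc with hq | hq
      · -- Q = t : t has south δ and west γ
        exact C.not_B ht (by rw [htc]; simp) (by rw [← hq]; exact hQs) htw
      · rw [C.mem_Univ'] at hq
        rcases hq with ⟨a, ha, ha2, hqa⟩ | ⟨b, hb, hb2, hqb⟩
        · exact (C.G_east_ne (a := a) (by omega)) (by rw [← hqa]; exact hQe)
        · exact absurd (C.not_B hQmem (by rw [hQc]; simp) hQs
            (by rw [hqb]; exact C.V_west (by omega))) (by simp)
    · rw [C.mem_Univ'] at hK
      rcases hK with ⟨a, ha, ha2, hKa⟩ | ⟨b, hb, hb2, hKb⟩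
      · exact hQ'n (by rw [← hKs, hKa]; exact C.G_south (by omega))
      · exact hKe (by rw [hKb]; exact C.V_east (by omega))
  refine ⟨hteq, ?_⟩
  refine C.uniq2 hn (C.V_mem (by omega)) ?_ ?_
  · rw [hns, hteq]
    have := C.V_succ (Y := C.k - 1) (by omega)
    rw [C.Varg (show C.k - 1 + 1 = C.k by omega)] at this
    rw [this]
  · rw [hnw, C.V_west (by omega)]

end Ctx
end STP
namespace STP
namespace Ctx

variable {G₁ : Type} [DecidableEq G₁] (C : Ctx G₁)

/-- anchors for an arbitrary supertile: its pre-white and white top-row tiles -/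
lemma T_anchor {x y : ℕ} (hx : x < C.w) (hy : y < C.h) :
    C.T x y (C.P x y) = C.G (C.k - 1) ∧ C.T x y (C.P x y + 1) = C.G C.k := by
  obtain ⟨hL, hk, hw, hw2, hh, hh2⟩ := C.basics
  have hc1 := C.hP1 x hx y hy
  have hck := C.hPk x hx y hy
  refine C.lemR (C.T_mem hx hy (by omega)) ?_ ?_ (C.T_mem hx hy (by omega)) ?_ ?_ ?_
  · exact C.T_gray hx hy (by omega) (by omega) (by omega)
  · exact C.T_south hx hy (by omega) (by omega)
  · exact C.T_white hx hy
  · exact C.T_south hx hy (by omega) (by omega)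
  · exact C.T_west hx hy (by omega) (by omega)

lemma R_anchor {x y : ℕ} (hx : x < C.w) (hy : y < C.h) :
    C.R x y (C.P x y) = C.V (C.k - 1) ∧ C.R x y (C.P x y + 1) = C.V C.k := by
  obtain ⟨hL, hk, hw, hw2, hh, hh2⟩ := C.basics
  have hc1 := C.hP1 x hx y hy
  have hck := C.hPk x hx y hy
  refine C.lemR' (C.R_mem hx hy (by omega)) ?_ ?_ (C.R_mem hx hy (by omega)) ?_ ?_ ?_
  · exact C.R_gray hx hy (by omega) (by omega) (by omega)
  · exact C.R_west hx hy (by omega) (by omega)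
  · exact C.R_white hx hy
  · exact C.R_west hx hy (by omega) (by omega)
  · exact C.R_succ hx hy (by omega) (by omega)

/-- ORB (row): the σ-orbit after the white counter is constant. -/
lemma orb_row : C.G (C.k + 2) = C.G (C.k + 1) := by
  obtain ⟨hL, hk, hw, hw2, hh, hh2⟩ := C.basics
  by_contra hne
  -- step A : r₂ := G (k+2) ∉ Univ
  have hr2c : (C.G (C.k + 2)).color = BWG.gray := C.G_gray (by omega) (by omega)
  have hr2U : C.G (C.k + 2) ∉ C.Univ := by
    rw [C.mem_Univ']
    rintro (⟨a, ha, ha2, hqa⟩ | ⟨b, hb, hb2, hqb⟩)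
    · rcases Nat.lt_or_ge a (C.k + 1) with h | h
      · exact C.G_ne (a := a) (b := C.k + 2) (by omega) (by omega) (by omega) (by omega)
          hqa.symm
      · exact hne (hqa.trans (C.Garg (by omega)))
    · exact C.not_B (C.G_mem (a := C.k + 2) (by omega)) (by rw [hr2c]; simp)
        (C.G_south (by omega)) (by rw [hqb]; exact C.V_west (by omega))
  have bud : ∀ {q' : Tile BWG G₁}, q' ∈ C.Θ.tiles → q'.color = BWG.gray →
      q' = C.G (C.k + 2) ∨ q' ∈ C.Univ :=
    fun hq' hq'c => C.budget (C.G_mem (by omega)) hr2c hr2U hq' hq'c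
  -- step C/D : the color-k supertile has fully calibrated top row and right column
  obtain ⟨x, y, hx, hy, hck⟩ := C.hsurj
  have hTk1 : C.T x y (C.k + 1) = C.G C.k := by
    have := (C.T_anchor hx hy).2; rw [hck] at this; exact this
  have hTL2 : C.T x y (C.L - 2) = C.G (C.L - 3) := by
    have := C.TGsync hx hy (i := C.k + 1) (by omega) hTk1 (C.L - 3 - C.k)
      (by omega) (by omega)
    rw [C.Targ (show C.k + 1 + (C.L - 3 - C.k) = C.L - 2 by omega),
      C.Garg (show C.k + (C.L - 3 - C.k) = C.L - 3 by omega)] at this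
    exact this
  have hRk1 : C.R x y (C.k + 1) = C.V C.k := by
    have := (C.R_anchor hx hy).2; rw [hck] at this; exact this
  have hRL2 : C.R x y (C.L - 2) = C.V (C.L - 3) := by
    have := C.RVsync hx hy (j := C.k + 1) (by omega) hRk1 (C.L - 3 - C.k)
      (by omega) (by omega)
    rw [C.Rarg (show C.k + 1 + (C.L - 3 - C.k) = C.L - 2 by omega),
      C.Varg (show C.k + (C.L - 3 - C.k) = C.L - 3 by omega)] at this
    exact this
  -- step F : the corner of this supertile has no home
  have hKc : (C.T x y (C.L - 1)).color = BWG.gray := by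
    have := C.hPk x hx y hy
    exact C.T_gray hx hy (by omega) (by omega) (by omega)
  have hKmem := C.T_mem (i := C.L - 1) hx hy (by omega)
  have hKw : (C.T x y (C.L - 1)).west = (C.G (C.L - 3)).east := by
    have := C.T_west hx hy (i := C.L - 2) (by omega) (by omega)
    rw [C.Targ (show C.L - 2 + 1 = C.L - 1 by omega)] at this
    rw [this, hTL2]
  have hKs : (C.T x y (C.L - 1)).south = (C.V (C.L - 3)).north := by
    have := C.R_succ hx hy (j := C.L - 2) (by omega) (by omega)
    rw [C.Rarg (show C.L - 2 + 1 = C.L - 1 by omega), ← C.T_eq_R] at this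
    rw [this, hRL2]
  -- G (L-3) has east ≠ γ
  have hGL3 : (C.G (C.L - 3)).east ≠ C.γ := by
    have hmem := C.G_mem (a := C.L - 3) (by omega)
    have hgc : (C.G (C.L - 3)).color = BWG.gray := C.G_gray (by omega) (by omega)
    rcases bud hmem hgc with hq | hq
    · rw [hq]; exact C.G_east_ne (by omega)
    · rw [C.mem_Univ'] at hq
      rcases hq with ⟨a, ha, ha2, hqa⟩ | ⟨b, hb, hb2, hqb⟩
      · rw [hqa]; exact C.G_east_ne (by omega)
      · exact absurd (C.not_B hmem (by rw [hgc]; simp) (C.G_south (by omega))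
          (by rw [hqb]; exact C.V_west (by omega))) (by simp)
  -- V (L-3) has north ≠ δ
  have hVL3 : (C.V (C.L - 3)).north ≠ C.δ := by
    have hmem := C.V_mem (b := C.L - 3) (by omega)
    have hgc : (C.V (C.L - 3)).color = BWG.gray := C.V_gray (by omega) (by omega)
    rcases bud hmem hgc with hq | hq
    · exact absurd (C.not_B hmem (by rw [hgc]; simp)
        (by rw [hq]; exact C.G_south (by omega)) (C.V_west (by omega))) (by simp)
    · rw [C.mem_Univ'] at hq
      rcases hq with ⟨a, ha, ha2, hqa⟩ | ⟨b, hb, hb2, hqb⟩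
      · exact absurd (C.not_B hmem (by rw [hgc]; simp)
          (by rw [hqa]; exact C.G_south (by omega)) (C.V_west (by omega))) (by simp)
      · rw [hqb]; exact C.V_north_ne (by omega)
  -- conclude
  rcases bud hKmem hKc with hK | hK
  · exact hVL3 (by rw [← hKs, hK]; exact C.G_south (by omega))
  · rw [C.mem_Univ'] at hK
    rcases hK with ⟨a, ha, ha2, hKa⟩ | ⟨b, hb, hb2, hKb⟩
    · exact hVL3 (by rw [← hKs, hKa]; exact C.G_south (by omega))
    · exact hGL3 (by rw [← hKw, hKb]; exact C.V_west (by omega))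

/-- ORB (column): the τ-orbit after the white counter is constant. -/
lemma orb_col : C.V (C.k + 2) = C.V (C.k + 1) := by
  obtain ⟨hL, hk, hw, hw2, hh, hh2⟩ := C.basics
  by_contra hne
  have hs2c : (C.V (C.k + 2)).color = BWG.gray := C.V_gray (by omega) (by omega)
  have hs2U : C.V (C.k + 2) ∉ C.Univ := by
    rw [C.mem_Univ']
    rintro (⟨a, ha, ha2, hqa⟩ | ⟨b, hb, hb2, hqb⟩)
    · exact C.not_B (C.V_mem (b := C.k + 2) (by omega)) (by rw [hs2c]; simp)
        (by rw [hqa]; exact C.G_south (by omega)) (C.V_west (by omega))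
    · rcases Nat.lt_or_ge b (C.k + 1) with h | h
      · exact C.V_ne (a := b) (b := C.k + 2) (by omega) (by omega) (by omega) (by omega)
          hqb.symm
      · exact hne (hqb.trans (C.Varg (by omega)))
  have bud : ∀ {q' : Tile BWG G₁}, q' ∈ C.Θ.tiles → q'.color = BWG.gray →
      q' = C.V (C.k + 2) ∨ q' ∈ C.Univ :=
    fun hq' hq'c => C.budget (C.V_mem (by omega)) hs2c hs2U hq' hq'c
  obtain ⟨x, y, hx, hy, hck⟩ := C.hsurj
  have hTk1 : C.T x y (C.k + 1) = C.G C.k := by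
    have := (C.T_anchor hx hy).2; rw [hck] at this; exact this
  have hTL2 : C.T x y (C.L - 2) = C.G (C.L - 3) := by
    have := C.TGsync hx hy (i := C.k + 1) (by omega) hTk1 (C.L - 3 - C.k)
      (by omega) (by omega)
    rw [C.Targ (show C.k + 1 + (C.L - 3 - C.k) = C.L - 2 by omega),
      C.Garg (show C.k + (C.L - 3 - C.k) = C.L - 3 by omega)] at this
    exact this
  have hRk1 : C.R x y (C.k + 1) = C.V C.k := by
    have := (C.R_anchor hx hy).2; rw [hck] at this; exact this
  have hRL2 : C.R x y (C.L - 2) = C.V (C.L - 3) := by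
    have := C.RVsync hx hy (j := C.k + 1) (by omega) hRk1 (C.L - 3 - C.k)
      (by omega) (by omega)
    rw [C.Rarg (show C.k + 1 + (C.L - 3 - C.k) = C.L - 2 by omega),
      C.Varg (show C.k + (C.L - 3 - C.k) = C.L - 3 by omega)] at this
    exact this
  have hKc : (C.T x y (C.L - 1)).color = BWG.gray := by
    have := C.hPk x hx y hy
    exact C.T_gray hx hy (by omega) (by omega) (by omega)
  have hKmem := C.T_mem (i := C.L - 1) hx hy (by omega)
  have hKw : (C.T x y (C.L - 1)).west = (C.G (C.L - 3)).east := by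
    have := C.T_west hx hy (i := C.L - 2) (by omega) (by omega)
    rw [C.Targ (show C.L - 2 + 1 = C.L - 1 by omega)] at this
    rw [this, hTL2]
  have hKs : (C.T x y (C.L - 1)).south = (C.V (C.L - 3)).north := by
    have := C.R_succ hx hy (j := C.L - 2) (by omega) (by omega)
    rw [C.Rarg (show C.L - 2 + 1 = C.L - 1 by omega), ← C.T_eq_R] at this
    rw [this, hRL2]
  have hGL3 : (C.G (C.L - 3)).east ≠ C.γ := by
    have hmem := C.G_mem (a := C.L - 3) (by omega)
    have hgc : (C.G (C.L - 3)).color = BWG.gray := C.G_gray (by omega) (by omega)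
    rcases bud hmem hgc with hq | hq
    · exact absurd (C.not_B hmem (by rw [hgc]; simp) (C.G_south (by omega))
        (by rw [hq]; exact C.V_west (by omega))) (by simp)
    · rw [C.mem_Univ'] at hq
      rcases hq with ⟨a, ha, ha2, hqa⟩ | ⟨b, hb, hb2, hqb⟩
      · rw [hqa]; exact C.G_east_ne (by omega)
      · exact absurd (C.not_B hmem (by rw [hgc]; simp) (C.G_south (by omega))
          (by rw [hqb]; exact C.V_west (by omega))) (by simp)
  have hVL3 : (C.V (C.L - 3)).north ≠ C.δ := by
    have hmem := C.V_mem (b := C.L - 3) (by omega)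
    have hgc : (C.V (C.L - 3)).color = BWG.gray := C.V_gray (by omega) (by omega)
    rcases bud hmem hgc with hq | hq
    · rw [hq]; exact C.V_north_ne (by omega)
    · rw [C.mem_Univ'] at hq
      rcases hq with ⟨a, ha, ha2, hqa⟩ | ⟨b, hb, hb2, hqb⟩
      · exact absurd (C.not_B hmem (by rw [hgc]; simp)
          (by rw [hqa]; exact C.G_south (by omega)) (C.V_west (by omega))) (by simp)
      · rw [hqb]; exact C.V_north_ne (by omega)
  rcases bud hKmem hKc with hK | hK
  · exact hGL3 (by rw [← hKw, hK]; exact C.V_west (by omega))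
  · rw [C.mem_Univ'] at hK
    rcases hK with ⟨a, ha, ha2, hKa⟩ | ⟨b, hb, hb2, hKb⟩
    · exact hVL3 (by rw [← hKs, hKa]; exact C.G_south (by omega))
    · exact hGL3 (by rw [← hKw, hKb]; exact C.V_west (by omega))

/-- the σ-orbit is constant from k+1 on -/
lemma G_const (t : ℕ) (ht : C.k + 1 + t ≤ C.L - 3) : C.G (C.k + 1 + t) = C.G (C.k + 1) := by
  obtain ⟨hL, hk, hw, hw2, hh, hh2⟩ := C.basics
  induction t with
  | zero => rfl
  | succ t ih =>
    have ihh := ih (by omega)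
    have := C.Gsync C.orb_row t (by omega) (by omega)
    rw [C.Garg (show C.k + 2 + t = C.k + 1 + (t + 1) by omega)] at this
    rw [this]
    exact ihh

lemma V_const (t : ℕ) (ht : C.k + 1 + t ≤ C.L - 3) : C.V (C.k + 1 + t) = C.V (C.k + 1) := by
  obtain ⟨hL, hk, hw, hw2, hh, hh2⟩ := C.basics
  induction t with
  | zero => rfl
  | succ t ih =>
    have ihh := ih (by omega)
    have := C.Vsync C.orb_col t (by omega) (by omega)
    rw [C.Varg (show C.k + 2 + t = C.k + 1 + (t + 1) by omega)] at this
    rw [this]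
    exact ihh

end Ctx
end STP
namespace STP
namespace Ctx

variable {G₁ : Type} [DecidableEq G₁] (C : Ctx G₁)

/-- after the white counter, the top row is constantly `G (k+1)` -/
lemma T_post {x y : ℕ} (hx : x < C.w) (hy : y < C.h) (t : ℕ) (h1 : 1 ≤ t)
    (h2 : C.P x y + 1 + t ≤ C.L - 2) : C.T x y (C.P x y + 1 + t) = C.G (C.k + 1) := by
  obtain ⟨hL, hk, hw, hw2, hh, hh2⟩ := C.basics
  have hc1 := C.hP1 x hx y hy
  have hck := C.hPk x hx y hy
  induction t with
  | zero => omega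
  | succ t ih =>
    rcases Nat.eq_zero_or_pos t with rfl | ht
    · -- base : the first tile after the white
      refine C.uniq2 (C.T_mem hx hy (by omega)) (C.G_mem (by omega)) ?_ ?_
      · rw [C.T_south hx hy (by omega) (by omega), C.G_south (by omega)]
      · have hTW := C.T_west hx hy (i := C.P x y + 1) (by omega) (by omega)
        have hGW := C.G_west (X := C.k) (by omega)
        rw [C.Targ (show C.P x y + 1 + 1 = C.P x y + 1 + 0 + 1 by omega)] at hTW
        rw [C.Targ (show C.P x y + 1 + 0 + 1 = C.P x y + 1 + 1 by omega)]
        rw [hTW, hGW, (C.T_anchor hx hy).2]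
    · have ihh := ih ht (by omega)
      have hstep : C.T x y (C.P x y + 1 + t + 1) = C.G (C.k + 2) := by
        refine C.uniq2 (C.T_mem hx hy (by omega)) (C.G_mem (by omega)) ?_ ?_
        · rw [C.T_south hx hy (by omega) (by omega), C.G_south (by omega)]
        · rw [C.T_west hx hy (by omega) (by omega), C.G_west (by omega), ihh]
      rw [C.Targ (show C.P x y + 1 + (t + 1) = C.P x y + 1 + t + 1 by omega), hstep]
      exact C.orb_row

/-- after the white counter, the right column is constantly `V (k+1)` -/
lemma R_post {x y : ℕ} (hx : x < C.w) (hy : y < C.h) (t : ℕ) (h1 : 1 ≤ t)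
    (h2 : C.P x y + 1 + t ≤ C.L - 2) : C.R x y (C.P x y + 1 + t) = C.V (C.k + 1) := by
  obtain ⟨hL, hk, hw, hw2, hh, hh2⟩ := C.basics
  have hc1 := C.hP1 x hx y hy
  have hck := C.hPk x hx y hy
  induction t with
  | zero => omega
  | succ t ih =>
    rcases Nat.eq_zero_or_pos t with rfl | ht
    · refine C.uniq2 (C.R_mem hx hy (by omega)) (C.V_mem (by omega)) ?_ ?_
      · have hRS := C.R_succ hx hy (j := C.P x y + 1) (by omega) (by omega)
        have hVS := C.V_succ (Y := C.k) (by omega)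
        rw [C.Rarg (show C.P x y + 1 + 1 = C.P x y + 1 + 0 + 1 by omega)] at hRS
        rw [C.Rarg (show C.P x y + 1 + 0 + 1 = C.P x y + 1 + 1 by omega)]
        rw [hRS, hVS, (C.R_anchor hx hy).2]
      · rw [C.R_west hx hy (by omega) (by omega), C.V_west (by omega)]
    · have ihh := ih ht (by omega)
      have hstep : C.R x y (C.P x y + 1 + t + 1) = C.V (C.k + 2) := by
        refine C.uniq2 (C.R_mem hx hy (by omega)) (C.V_mem (by omega)) ?_ ?_
        · rw [C.R_succ hx hy (by omega) (by omega), C.V_succ (by omega), ihh]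
        · rw [C.R_west hx hy (by omega) (by omega), C.V_west (by omega)]
      rw [C.Rarg (show C.P x y + 1 + (t + 1) = C.P x y + 1 + t + 1 by omega), hstep]
      exact C.orb_col

lemma T_L2 {x y : ℕ} (hx : x < C.w) (hy : y < C.h) :
    C.T x y (C.L - 2) = C.G (C.k + 1) := by
  obtain ⟨hL, hk, hw, hw2, hh, hh2⟩ := C.basics
  have hc1 := C.hP1 x hx y hy
  have hck := C.hPk x hx y hy
  have := C.T_post hx hy (C.L - 3 - C.P x y) (by omega) (by omega)
  rw [C.Targ (show C.P x y + 1 + (C.L - 3 - C.P x y) = C.L - 2 by omega)] at this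
  exact this

lemma R_L2 {x y : ℕ} (hx : x < C.w) (hy : y < C.h) :
    C.R x y (C.L - 2) = C.V (C.k + 1) := by
  obtain ⟨hL, hk, hw, hw2, hh, hh2⟩ := C.basics
  have hc1 := C.hP1 x hx y hy
  have hck := C.hPk x hx y hy
  have := C.R_post hx hy (C.L - 3 - C.P x y) (by omega) (by omega)
  rw [C.Rarg (show C.P x y + 1 + (C.L - 3 - C.P x y) = C.L - 2 by omega)] at this
  exact this

lemma corner_west {x y : ℕ} (hx : x < C.w) (hy : y < C.h) :
    (C.T x y (C.L - 1)).west = (C.G (C.k + 1)).east := by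
  obtain ⟨hL, hk, hw, hw2, hh, hh2⟩ := C.basics
  have := C.T_west hx hy (i := C.L - 2) (by omega) (by omega)
  rw [C.Targ (show C.L - 2 + 1 = C.L - 1 by omega)] at this
  rw [this, C.T_L2 hx hy]

lemma corner_south {x y : ℕ} (hx : x < C.w) (hy : y < C.h) :
    (C.T x y (C.L - 1)).south = (C.V (C.k + 1)).north := by
  obtain ⟨hL, hk, hw, hw2, hh, hh2⟩ := C.basics
  have := C.R_succ hx hy (j := C.L - 2) (by omega) (by omega)
  rw [C.Rarg (show C.L - 2 + 1 = C.L - 1 by omega), ← C.T_eq_R] at this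
  rw [this, C.R_L2 hx hy]

/-- all corners are the same tile -/
lemma corner_eq {x y : ℕ} (hx : x < C.w) (hy : y < C.h) :
    C.T x y (C.L - 1) = C.T 0 0 (C.L - 1) := by
  obtain ⟨hL, hk, hw, hw2, hh, hh2⟩ := C.basics
  refine C.uniq2 (C.T_mem hx hy (by omega)) (C.T_mem C.hw C.hh (by omega)) ?_ ?_
  · rw [C.corner_south hx hy, C.corner_south C.hw C.hh]
  · rw [C.corner_west hx hy, C.corner_west C.hw C.hh]

lemma K0_north_ne : (C.T 0 0 (C.L - 1)).north ≠ C.δ := by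
  have hh1 : C.h - 1 < C.h := by have := C.hh; omega
  rw [← C.corner_eq C.hw hh1]
  exact C.corner_north_ne C.hw

lemma K0_west_ne : (C.T 0 0 (C.L - 1)).west ≠ C.γ := by
  obtain ⟨hL, hk, hw, hw2, hh, hh2⟩ := C.basics
  rw [C.corner_west C.hw C.hh]
  exact C.G_east_ne (by omega)

lemma K0_south_ne : (C.T 0 0 (C.L - 1)).south ≠ C.δ := by
  obtain ⟨hL, hk, hw, hw2, hh, hh2⟩ := C.basics
  rw [C.corner_south C.hw C.hh]
  exact C.V_north_ne (by omega)

/-- every top-row tile (except the corner) emits north glue δ -/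
lemma T_north {x y i : ℕ} (hx : x < C.w) (hy : y < C.h) (h1 : 1 ≤ i) (h2 : i ≤ C.L - 2) :
    (C.T x y i).north = C.δ := by
  obtain ⟨hL, hk, hw, hw2, hh, hh2⟩ := C.basics
  have hc1 := C.hP1 x hx y hy
  have hck := C.hPk x hx y hy
  rcases Nat.lt_or_ge i (C.P x y + 1) with hi | hi
  · -- pre-white region
    have hqc : (C.T x y i).color = BWG.gray := C.T_gray hx hy h1 (by omega) (by omega)
    have hqs : (C.T x y i).south = C.δ := C.T_south hx hy h1 h2
    have hqm := C.T_mem hx hy (i := i) (by omega)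
    -- the tile is in Univ (no rogue): otherwise the corner K₀ has no home
    have hU : C.T x y i ∈ C.Univ := by
      by_contra hqU
      have bud : ∀ {q' : Tile BWG G₁}, q' ∈ C.Θ.tiles → q'.color = BWG.gray →
          q' = C.T x y i ∨ q' ∈ C.Univ := fun hq' hq'c => C.budget hqm hqc hqU hq' hq'c
      have hK0c : (C.T 0 0 (C.L - 1)).color = BWG.gray := by
        have := C.hPk 0 C.hw 0 C.hh
        exact C.T_gray C.hw C.hh (by omega) (by omega) (by omega)
      have hK0m := C.T_mem (i := C.L - 1) C.hw C.hh (by omega)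
      rcases bud hK0m hK0c with hK | hK
      · exact C.K0_south_ne (by rw [hK]; exact hqs)
      · rw [C.mem_Univ'] at hK
        rcases hK with ⟨a, ha, ha2, hKa⟩ | ⟨b, hb, hb2, hKb⟩
        · exact C.K0_south_ne (by rw [hKa]; exact C.G_south (by omega))
        · exact C.K0_west_ne (by rw [hKb]; exact C.V_west (by omega))
    rw [C.mem_Univ'] at hU
    rcases hU with ⟨a, ha, ha2, hUa⟩ | ⟨b, hb, hb2, hUb⟩
    · rw [hUa]; exact C.G_north (by omega)
    · exact absurd (C.not_B hqm (by rw [hqc]; simp) hqs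
        (by rw [hUb]; exact C.V_west (by omega))) (by simp)
  · rcases Nat.eq_or_lt_of_le hi with hi' | hi'
    · -- the white counter
      rw [C.Targ hi'.symm, (C.T_anchor hx hy).2]
      exact C.G_north (by omega)
    · -- post-white region
      have := C.T_post hx hy (i - C.P x y - 1) (by omega) (by omega)
      rw [C.Targ (show C.P x y + 1 + (i - C.P x y - 1) = i by omega)] at this
      rw [this]
      exact C.G_north (by omega)

/-- every right-column tile (except the corner) emits east glue γ -/
lemma R_east {x y j : ℕ} (hx : x < C.w) (hy : y < C.h) (h1 : 1 ≤ j) (h2 : j ≤ C.L - 2) :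
    (C.R x y j).east = C.γ := by
  obtain ⟨hL, hk, hw, hw2, hh, hh2⟩ := C.basics
  have hc1 := C.hP1 x hx y hy
  have hck := C.hPk x hx y hy
  rcases Nat.lt_or_ge j (C.P x y + 1) with hj | hj
  · have hqc : (C.R x y j).color = BWG.gray := C.R_gray hx hy h1 (by omega) (by omega)
    have hqw : (C.R x y j).west = C.γ := C.R_west hx hy h1 h2
    have hqm := C.R_mem hx hy (j := j) (by omega)
    have hU : C.R x y j ∈ C.Univ := by
      by_contra hqU
      have bud : ∀ {q' : Tile BWG G₁}, q' ∈ C.Θ.tiles → q'.color = BWG.gray →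
          q' = C.R x y j ∨ q' ∈ C.Univ := fun hq' hq'c => C.budget hqm hqc hqU hq' hq'c
      have hK0c : (C.T 0 0 (C.L - 1)).color = BWG.gray := by
        have := C.hPk 0 C.hw 0 C.hh
        exact C.T_gray C.hw C.hh (by omega) (by omega) (by omega)
      have hK0m := C.T_mem (i := C.L - 1) C.hw C.hh (by omega)
      rcases bud hK0m hK0c with hK | hK
      · exact C.K0_west_ne (by rw [hK]; exact hqw)
      · rw [C.mem_Univ'] at hK
        rcases hK with ⟨a, ha, ha2, hKa⟩ | ⟨b, hb, hb2, hKb⟩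
        · exact C.K0_south_ne (by rw [hKa]; exact C.G_south (by omega))
        · exact C.K0_west_ne (by rw [hKb]; exact C.V_west (by omega))
    rw [C.mem_Univ'] at hU
    rcases hU with ⟨a, ha, ha2, hUa⟩ | ⟨b, hb, hb2, hUb⟩
    · exact absurd (C.not_B hqm (by rw [hqc]; simp)
        (by rw [hUa]; exact C.G_south (by omega)) hqw) (by simp)
    · rw [hUb]; exact C.V_east (by omega)
  · rcases Nat.eq_or_lt_of_le hj with hj' | hj'
    · rw [C.Rarg hj'.symm, (C.R_anchor hx hy).2]
      exact C.V_east (by omega)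
    · have := C.R_post hx hy (j - C.P x y - 1) (by omega) (by omega)
      rw [C.Rarg (show C.P x y + 1 + (j - C.P x y - 1) = j by omega)] at this
      rw [this]
      exact C.V_east (by omega)

end Ctx
end STP
namespace STP
namespace Ctx

variable {G₁ : Type} [DecidableEq G₁] (C : Ctx G₁)

/-- the south glue entering the bottom row of a complete supertile -/
lemma bottom_south {x y i : ℕ} (hx : x < C.w) (hy1 : 1 ≤ y) (hy : y < C.h)
    (hi1 : 1 ≤ i) (hi2 : i ≤ C.L - 1) :
    (C.f (x * C.L + i - 1) (y * C.L - 1)).south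
      = if i = C.L - 1 then (C.T 0 0 (C.L - 1)).north else C.δ := by
  obtain ⟨hL, hk, hw, hw2, hh, hh2⟩ := C.basics
  have hmulx := C.mul_le hx
  have hmuly := C.mul_le hy
  have hyL := C.le_mul y hy1
  have hsub := subm (b := C.L) hy1
  have hy1' : y - 1 < C.h := by omega
  have hadj := C.hSadj (x * C.L + i - 1) (by rw [C.QWe]; omega)
    (y * C.L - 2) (by rw [C.QHe]; omega)
  rw [show y * C.L - 2 + 1 = y * C.L - 1 by omega] at hadj
  have hbelow : C.f (x * C.L + i - 1) (y * C.L - 2) = C.T x (y - 1) i := by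
    show _ = C.f _ ((y - 1) * C.L + C.L - 2)
    rw [show (y - 1) * C.L + C.L - 2 = y * C.L - 2 by omega]
  rw [hadj, hbelow]
  by_cases hiL : i = C.L - 1
  · rw [if_pos hiL, hiL, C.corner_eq hx hy1']
  · rw [if_neg hiL]
    exact C.T_north hx hy1' hi1 (by omega)

/-- the west glue entering the left column of a complete supertile -/
lemma left_west {x y j : ℕ} (hx1 : 1 ≤ x) (hx : x < C.w) (hy : y < C.h)
    (hj1 : 1 ≤ j) (hj2 : j ≤ C.L - 1) :
    (C.f (x * C.L - 1) (y * C.L + j - 1)).west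
      = if j = C.L - 1 then (C.T 0 0 (C.L - 1)).east else C.γ := by
  obtain ⟨hL, hk, hw, hw2, hh, hh2⟩ := C.basics
  have hmulx := C.mul_le hx
  have hmuly := C.mul_le hy
  have hxL := C.le_mul x hx1
  have hsub := subm (b := C.L) hx1
  have hx1' : x - 1 < C.w := by omega
  have hadj := C.hWadj (x * C.L - 2) (by rw [C.QWe]; omega)
    (y * C.L + j - 1) (by rw [C.QHe]; omega)
  rw [show x * C.L - 2 + 1 = x * C.L - 1 by omega] at hadj
  have hleft : C.f (x * C.L - 2) (y * C.L + j - 1) = C.R (x - 1) y j := by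
    show _ = C.f ((x - 1) * C.L + C.L - 2) _
    rw [show (x - 1) * C.L + C.L - 2 = x * C.L - 2 by omega]
  rw [hadj, hleft]
  by_cases hjL : j = C.L - 1
  · rw [if_pos hjL, hjL, ← C.T_eq_R, C.corner_eq hx1' hy]
  · rw [if_neg hjL]
    exact C.R_east hx1' hy hj1 (by omega)

/-- CORE: two complete supertiles with the same input glues are identical. -/
lemma blockEq {x₁ y₁ x₂ y₂ : ℕ} (hx₁ : 1 ≤ x₁) (hx₁' : x₁ < C.w)
    (hy₁ : 1 ≤ y₁) (hy₁' : y₁ < C.h) (hx₂ : 1 ≤ x₂) (hx₂' : x₂ < C.w)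
    (hy₂ : 1 ≤ y₂) (hy₂' : y₂ < C.h)
    (hS : (C.f (x₁ * C.L - 1) (y₁ * C.L - 1)).south
        = (C.f (x₂ * C.L - 1) (y₂ * C.L - 1)).south)
    (hW : (C.f (x₁ * C.L - 1) (y₁ * C.L - 1)).west
        = (C.f (x₂ * C.L - 1) (y₂ * C.L - 1)).west) :
    ∀ i j, i ≤ C.L - 1 → j ≤ C.L - 1 →
      C.f (x₁ * C.L + i - 1) (y₁ * C.L + j - 1) = C.f (x₂ * C.L + i - 1) (y₂ * C.L + j - 1) := by
  obtain ⟨hL, hk, hw, hw2, hh, hh2⟩ := C.basics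
  have hm₁ := C.mul_le hx₁'
  have hm₂ := C.mul_le hx₂'
  have hm₃ := C.mul_le hy₁'
  have hm₄ := C.mul_le hy₂'
  have hxL₁ := C.le_mul x₁ hx₁
  have hxL₂ := C.le_mul x₂ hx₂
  have hyL₁ := C.le_mul y₁ hy₁
  have hyL₂ := C.le_mul y₂ hy₂
  have hmem : ∀ x y i j : ℕ, x < C.w → y < C.h → i ≤ C.L - 1 → j ≤ C.L - 1 →
      C.f (x * C.L + i - 1) (y * C.L + j - 1) ∈ C.Θ.tiles := by
    intro x y i j hx hy hi hj
    exact C.fmem (C.inner_bound hx (by omega)) (C.inner_boundY hy (by omega))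
  intro i j
  induction i generalizing j with
  | zero =>
    induction j with
    | zero =>
      intro _ _
      exact C.uniq2 (hmem _ _ _ _ hx₁' hy₁' (by omega) (by omega))
        (hmem _ _ _ _ hx₂' hy₂' (by omega) (by omega)) hS hW
    | succ j ihj =>
      intro hi hj
      have ih := ihj (by omega) (by omega)
      refine C.uniq2 (hmem _ _ _ _ hx₁' hy₁' (by omega) (by omega))
        (hmem _ _ _ _ hx₂' hy₂' (by omega) (by omega)) ?_ ?_
      · -- souths from the norths below
        have e₁ : y₁ * C.L + (j + 1) - 1 = (y₁ * C.L + j - 1) + 1 := by omega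
        have e₂ : y₂ * C.L + (j + 1) - 1 = (y₂ * C.L + j - 1) + 1 := by omega
        rw [e₁, e₂, C.hSadj _ (by rw [C.QWe]; omega) _ (by rw [C.QHe]; omega),
          C.hSadj _ (by rw [C.QWe]; omega) _ (by rw [C.QHe]; omega), ih]
      · -- wests from the left columns
        have l₁ := C.left_west hx₁ hx₁' hy₁' (j := j + 1) (by omega) (by omega)
        have l₂ := C.left_west hx₂ hx₂' hy₂' (j := j + 1) (by omega) (by omega)
        rw [show x₁ * C.L + 0 - 1 = x₁ * C.L - 1 by omega,
          show x₂ * C.L + 0 - 1 = x₂ * C.L - 1 by omega, l₁, l₂]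
  | succ i ihi =>
    induction j with
    | zero =>
      intro hi hj
      have ih := ihi 0 (by omega) (by omega)
      refine C.uniq2 (hmem _ _ _ _ hx₁' hy₁' (by omega) (by omega))
        (hmem _ _ _ _ hx₂' hy₂' (by omega) (by omega)) ?_ ?_
      · have b₁ := C.bottom_south hx₁' hy₁ hy₁' (i := i + 1) (by omega) (by omega)
        have b₂ := C.bottom_south hx₂' hy₂ hy₂' (i := i + 1) (by omega) (by omega)
        rw [show y₁ * C.L + 0 - 1 = y₁ * C.L - 1 by omega,
          show y₂ * C.L + 0 - 1 = y₂ * C.L - 1 by omega, b₁, b₂]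
      · have e₁ : x₁ * C.L + (i + 1) - 1 = (x₁ * C.L + i - 1) + 1 := by omega
        have e₂ : x₂ * C.L + (i + 1) - 1 = (x₂ * C.L + i - 1) + 1 := by omega
        rw [e₁, e₂, C.hWadj _ (by rw [C.QWe]; omega) _ (by rw [C.QHe]; omega),
          C.hWadj _ (by rw [C.QWe]; omega) _ (by rw [C.QHe]; omega), ih]
    | succ j ihj =>
      intro hi hj
      have ihS := ihj (by omega) (by omega)
      have ihW := ihi (j + 1) (by omega) (by omega)
      refine C.uniq2 (hmem _ _ _ _ hx₁' hy₁' (by omega) (by omega))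
        (hmem _ _ _ _ hx₂' hy₂' (by omega) (by omega)) ?_ ?_
      · have e₁ : y₁ * C.L + (j + 1) - 1 = (y₁ * C.L + j - 1) + 1 := by omega
        have e₂ : y₂ * C.L + (j + 1) - 1 = (y₂ * C.L + j - 1) + 1 := by omega
        rw [e₁, e₂, C.hSadj _ (by rw [C.QWe]; omega) _ (by rw [C.QHe]; omega),
          C.hSadj _ (by rw [C.QWe]; omega) _ (by rw [C.QHe]; omega), ihS]
      · have e₁ : x₁ * C.L + (i + 1) - 1 = (x₁ * C.L + i - 1) + 1 := by omega
        have e₂ : x₂ * C.L + (i + 1) - 1 = (x₂ * C.L + i - 1) + 1 := by omega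
        rw [e₁, e₂, C.hWadj _ (by rw [C.QWe]; omega) _ (by rw [C.QHe]; omega),
          C.hWadj _ (by rw [C.QWe]; omega) _ (by rw [C.QHe]; omega), ihW]

end Ctx
end STP
namespace STP

variable {G₁ : Type} [DecidableEq G₁]

open scoped Classical in
/-- color read off from the counter in the top row of a supertile assignment -/
noncomputable def colorOfg (ℓ : ℕ) (g : ℕ → ℕ → Option (Tile BWG G₁)) : ℕ :=
  if h : ∃ c, (g (c + 1) (ℓ - 1)).map Tile.color = some BWG.white ∧
      ∀ c' < c, (g (c' + 1) (ℓ - 1)).map Tile.color ≠ some BWG.white then h.choose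
  else 0

/-- the tile associated to a supertile assignment -/
noncomputable def mkTile (ℓ : ℕ) (e : (ℕ → ℕ → Option (Tile BWG G₁)) → ℕ)
    (g : ℕ → ℕ → Option (Tile BWG G₁)) : Tile ℕ (G₁ ⊕ ℕ) where
  color := colorOfg ℓ g
  north := match g 0 (ℓ - 1) with
    | some t => Sum.inl t.north
    | none => match g 1 (ℓ - 1) with
      | some t => Sum.inl t.north
      | none => Sum.inr 0
  east := match g (ℓ - 1) 0 with
    | some t => Sum.inl t.east
    | none => match g (ℓ - 1) 1 with
      | some t => Sum.inl t.east
      | none => Sum.inr 0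
  south := if (g 0 1).isSome then
      match g 0 0 with
      | some t => Sum.inl t.south
      | none => Sum.inr (2 * e g)
    else
      match g 1 0 with
      | some t => Sum.inl t.south
      | none => Sum.inr (2 * e g)
  west := if (g 0 1).isSome then
      match g 0 0 with
      | some t => Sum.inl t.west
      | none => match g 0 1 with
        | some t => Sum.inl t.west
        | none => Sum.inr 0
    else Sum.inr (2 * e g + 1)

namespace Ctx

variable (C : Ctx G₁)

/-- basic evaluations of `superOpt` at the positions used by `mkTile` -/
lemma so_val {x y i j : ℕ} (hi : i < C.L) (hj : j < C.L) (hxi : 1 ≤ x ∨ 1 ≤ i)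
    (hyj : 1 ≤ y ∨ 1 ≤ j) :
    superOpt C.L C.f x y i j = some (C.f (x * C.L + i - 1) (y * C.L + j - 1)) := by
  rw [superOpt, if_pos ⟨hi, hj, hxi, hyj⟩]

lemma so_none {x y i j : ℕ}
    (hc : ¬(i < C.L ∧ j < C.L ∧ (1 ≤ x ∨ 1 ≤ i) ∧ (1 ≤ y ∨ 1 ≤ j))) :
    superOpt C.L C.f x y i j = none := by
  rw [superOpt, if_neg hc]

open scoped Classical in
/-- the color of the supertile assignment is the pattern color -/
lemma colorOfg_eq {x y : ℕ} (hx : x < C.w) (hy : y < C.h) :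
    colorOfg C.L (superOpt C.L C.f x y) = C.P x y := by
  obtain ⟨hL, hk, hw, hw2, hh, hh2⟩ := C.basics
  have hc1 := C.hP1 x hx y hy
  have hck := C.hPk x hx y hy
  have key : ∀ i, 1 ≤ i → i ≤ C.L - 1 →
      (superOpt C.L C.f x y i (C.L - 1)).map Tile.color
        = some (if i = C.P x y + 1 then BWG.white else BWG.gray) := by
    intro i h1 h2
    rw [C.so_val (by omega) (by omega) (Or.inr h1) (Or.inr (by omega))]
    have : C.f (x * C.L + i - 1) (y * C.L + (C.L - 1) - 1) = C.T x y i := by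
      show _ = C.f _ (y * C.L + C.L - 2)
      rw [show y * C.L + (C.L - 1) - 1 = y * C.L + C.L - 2 by omega]
    rw [this, Option.map_some, C.T_color hx hy h1 h2]
  have hex : ∃ c, (superOpt C.L C.f x y (c + 1) (C.L - 1)).map Tile.color
      = some BWG.white ∧
      ∀ c' < c, (superOpt C.L C.f x y (c' + 1) (C.L - 1)).map Tile.color
        ≠ some BWG.white := by
    refine ⟨C.P x y, by rw [key _ (by omega) (by omega), if_pos rfl], ?_⟩
    intro c' hc'
    rw [key _ (by omega) (by omega), if_neg (by omega)]
    simp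
  rw [colorOfg, dif_pos hex]
  obtain ⟨h1, h2⟩ := hex.choose_spec
  set c₀ := hex.choose with hc₀
  rcases Nat.lt_trichotomy c₀ (C.P x y) with hlt | heq | hgt
  · exfalso
    rw [key _ (by omega) (by omega), if_neg (by omega)] at h1
    simp at h1
  · exact heq
  · exfalso
    refine h2 (C.P x y) hgt ?_
    rw [key _ (by omega) (by omega), if_pos rfl]

end Ctx
end STP
namespace STP
namespace Ctx

variable {G₁ : Type} [DecidableEq G₁] (C : Ctx G₁)
variable (e : (ℕ → ℕ → Option (Tile BWG G₁)) → ℕ)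

lemma mk_color (g : ℕ → ℕ → Option (Tile BWG G₁)) :
    (mkTile C.L e g).color = colorOfg C.L g := rfl

lemma mk_north1 {x y : ℕ} (hx1 : 1 ≤ x) :
    (mkTile C.L e (superOpt C.L C.f x y)).north
      = Sum.inl ((C.f (x * C.L - 1) (y * C.L + C.L - 2)).north) := by
  obtain ⟨hL, hk, hw, hw2, hh, hh2⟩ := C.basics
  have h1 : superOpt C.L C.f x y 0 (C.L - 1)
      = some (C.f (x * C.L - 1) (y * C.L + C.L - 2)) := by
    rw [C.so_val (by omega) (by omega) (Or.inl hx1) (Or.inr (by omega))]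
    rw [show x * C.L + 0 - 1 = x * C.L - 1 by omega,
      show y * C.L + (C.L - 1) - 1 = y * C.L + C.L - 2 by omega]
  simp only [mkTile, h1]

lemma mk_north0 {y : ℕ} :
    (mkTile C.L e (superOpt C.L C.f 0 y)).north
      = Sum.inl ((C.f 0 (y * C.L + C.L - 2)).north) := by
  obtain ⟨hL, hk, hw, hw2, hh, hh2⟩ := C.basics
  have h0 : superOpt C.L C.f 0 y 0 (C.L - 1) = none := C.so_none (by omega)
  have h1 : superOpt C.L C.f 0 y 1 (C.L - 1)
      = some (C.f 0 (y * C.L + C.L - 2)) := by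
    rw [C.so_val (by omega) (by omega) (Or.inr (by omega)) (Or.inr (by omega))]
    rw [show 0 * C.L + 1 - 1 = 0 by omega,
      show y * C.L + (C.L - 1) - 1 = y * C.L + C.L - 2 by omega]
  simp only [mkTile, h0, h1]

lemma mk_east1 {x y : ℕ} (hy1 : 1 ≤ y) :
    (mkTile C.L e (superOpt C.L C.f x y)).east
      = Sum.inl ((C.f (x * C.L + C.L - 2) (y * C.L - 1)).east) := by
  obtain ⟨hL, hk, hw, hw2, hh, hh2⟩ := C.basics
  have h1 : superOpt C.L C.f x y (C.L - 1) 0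
      = some (C.f (x * C.L + C.L - 2) (y * C.L - 1)) := by
    rw [C.so_val (by omega) (by omega) (Or.inr (by omega)) (Or.inl hy1)]
    rw [show x * C.L + (C.L - 1) - 1 = x * C.L + C.L - 2 by omega,
      show y * C.L + 0 - 1 = y * C.L - 1 by omega]
  simp only [mkTile, h1]

lemma mk_east0 {x : ℕ} :
    (mkTile C.L e (superOpt C.L C.f x 0)).east
      = Sum.inl ((C.f (x * C.L + C.L - 2) 0).east) := by
  obtain ⟨hL, hk, hw, hw2, hh, hh2⟩ := C.basics
  have h0 : superOpt C.L C.f x 0 (C.L - 1) 0 = none := C.so_none (by omega)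
  have h1 : superOpt C.L C.f x 0 (C.L - 1) 1
      = some (C.f (x * C.L + C.L - 2) 0) := by
    rw [C.so_val (by omega) (by omega) (Or.inr (by omega)) (Or.inr (by omega))]
    rw [show x * C.L + (C.L - 1) - 1 = x * C.L + C.L - 2 by omega,
      show 0 * C.L + 1 - 1 = 0 by omega]
  simp only [mkTile, h0, h1]

lemma so01_some {x y : ℕ} (hx1 : 1 ≤ x) :
    superOpt C.L C.f x y 0 1 = some (C.f (x * C.L - 1) (y * C.L)) := by
  obtain ⟨hL, hk, hw, hw2, hh, hh2⟩ := C.basics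
  rw [C.so_val (by omega) (by omega) (Or.inl hx1) (Or.inr (by omega))]
  rw [show x * C.L + 0 - 1 = x * C.L - 1 by omega,
    show y * C.L + 1 - 1 = y * C.L by omega]

lemma so01_none {y : ℕ} : superOpt C.L C.f 0 y 0 1 = none := C.so_none (by omega)

lemma mk_south11 {x y : ℕ} (hx1 : 1 ≤ x) (hy1 : 1 ≤ y) :
    (mkTile C.L e (superOpt C.L C.f x y)).south
      = Sum.inl ((C.f (x * C.L - 1) (y * C.L - 1)).south) := by
  obtain ⟨hL, hk, hw, hw2, hh, hh2⟩ := C.basics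
  have h1 := C.so01_some (y := y) hx1
  have h2 : superOpt C.L C.f x y 0 0 = some (C.f (x * C.L - 1) (y * C.L - 1)) := by
    rw [C.so_val (by omega) (by omega) (Or.inl hx1) (Or.inl hy1)]
    rw [show x * C.L + 0 - 1 = x * C.L - 1 by omega,
      show y * C.L + 0 - 1 = y * C.L - 1 by omega]
  simp only [mkTile, h1, h2, Option.isSome_some, if_true]

lemma mk_south10 {x : ℕ} (hx1 : 1 ≤ x) :
    (mkTile C.L e (superOpt C.L C.f x 0)).south
      = Sum.inr (2 * e (superOpt C.L C.f x 0)) := by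
  obtain ⟨hL, hk, hw, hw2, hh, hh2⟩ := C.basics
  have h1 := C.so01_some (y := 0) hx1
  have h2 : superOpt C.L C.f x 0 0 0 = none := C.so_none (by omega)
  simp only [mkTile, h1, h2, Option.isSome_some, if_true]

lemma mk_south01 {y : ℕ} (hy1 : 1 ≤ y) :
    (mkTile C.L e (superOpt C.L C.f 0 y)).south
      = Sum.inl ((C.f 0 (y * C.L - 1)).south) := by
  obtain ⟨hL, hk, hw, hw2, hh, hh2⟩ := C.basics
  have h1 := C.so01_none (y := y)
  have h2 : superOpt C.L C.f 0 y 1 0 = some (C.f 0 (y * C.L - 1)) := by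
    rw [C.so_val (by omega) (by omega) (Or.inr (by omega)) (Or.inl hy1)]
    rw [show 0 * C.L + 1 - 1 = 0 by omega,
      show y * C.L + 0 - 1 = y * C.L - 1 by omega]
  simp only [mkTile, h1, h2, Option.isSome_none, Bool.false_eq_true, if_false]

lemma mk_south00 :
    (mkTile C.L e (superOpt C.L C.f 0 0)).south
      = Sum.inr (2 * e (superOpt C.L C.f 0 0)) := by
  obtain ⟨hL, hk, hw, hw2, hh, hh2⟩ := C.basics
  have h1 := C.so01_none (y := 0)
  have h2 : superOpt C.L C.f 0 0 1 0 = none := C.so_none (by omega)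
  simp only [mkTile, h1, h2, Option.isSome_none, Bool.false_eq_true, if_false]

lemma mk_west11 {x y : ℕ} (hx1 : 1 ≤ x) (hy1 : 1 ≤ y) :
    (mkTile C.L e (superOpt C.L C.f x y)).west
      = Sum.inl ((C.f (x * C.L - 1) (y * C.L - 1)).west) := by
  obtain ⟨hL, hk, hw, hw2, hh, hh2⟩ := C.basics
  have h1 := C.so01_some (y := y) hx1
  have h2 : superOpt C.L C.f x y 0 0 = some (C.f (x * C.L - 1) (y * C.L - 1)) := by
    rw [C.so_val (by omega) (by omega) (Or.inl hx1) (Or.inl hy1)]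
    rw [show x * C.L + 0 - 1 = x * C.L - 1 by omega,
      show y * C.L + 0 - 1 = y * C.L - 1 by omega]
  simp only [mkTile, h1, h2, Option.isSome_some, if_true]

lemma mk_west10 {x : ℕ} (hx1 : 1 ≤ x) :
    (mkTile C.L e (superOpt C.L C.f x 0)).west
      = Sum.inl ((C.f (x * C.L - 1) 0).west) := by
  obtain ⟨hL, hk, hw, hw2, hh, hh2⟩ := C.basics
  have h1 : superOpt C.L C.f x 0 0 1 = some (C.f (x * C.L - 1) 0) := by
    have := C.so01_some (y := 0) hx1
    rw [show 0 * C.L = 0 by omega] at this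
    exact this
  have h2 : superOpt C.L C.f x 0 0 0 = none := C.so_none (by omega)
  simp only [mkTile, h1, h2, Option.isSome_some, if_true]

lemma mk_west0 {y : ℕ} :
    (mkTile C.L e (superOpt C.L C.f 0 y)).west
      = Sum.inr (2 * e (superOpt C.L C.f 0 y) + 1) := by
  obtain ⟨hL, hk, hw, hw2, hh, hh2⟩ := C.basics
  have h1 := C.so01_none (y := y)
  simp only [mkTile, h1, Option.isSome_none, Bool.false_eq_true, if_false]

end Ctx
end STP
namespace STP
namespace Ctx

variable {G₁ : Type} [DecidableEq G₁] (C : Ctx G₁)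

/-- two complete supertiles with equal input glues have equal assignments -/
lemma so_eq {x₁ y₁ x₂ y₂ : ℕ} (hx₁ : 1 ≤ x₁) (hx₁' : x₁ < C.w)
    (hy₁ : 1 ≤ y₁) (hy₁' : y₁ < C.h) (hx₂ : 1 ≤ x₂) (hx₂' : x₂ < C.w)
    (hy₂ : 1 ≤ y₂) (hy₂' : y₂ < C.h)
    (hS : (C.f (x₁ * C.L - 1) (y₁ * C.L - 1)).south
        = (C.f (x₂ * C.L - 1) (y₂ * C.L - 1)).south)
    (hW : (C.f (x₁ * C.L - 1) (y₁ * C.L - 1)).west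
        = (C.f (x₂ * C.L - 1) (y₂ * C.L - 1)).west) :
    superOpt C.L C.f x₁ y₁ = superOpt C.L C.f x₂ y₂ := by
  obtain ⟨hL, hk, hw, hw2, hh, hh2⟩ := C.basics
  funext i j
  by_cases hij : i < C.L ∧ j < C.L
  · rw [C.so_val hij.1 hij.2 (Or.inl hx₁) (Or.inl hy₁),
      C.so_val hij.1 hij.2 (Or.inl hx₂) (Or.inl hy₂)]
    exact congrArg some
      (C.blockEq hx₁ hx₁' hy₁ hy₁' hx₂ hx₂' hy₂ hy₂' hS hW i j (by omega) (by omega))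
  · rw [C.so_none (fun hc => hij ⟨hc.1, hc.2.1⟩), C.so_none (fun hc => hij ⟨hc.1, hc.2.1⟩)]

/-- the full conclusion, for a bundled context -/
lemma final :
    ∃ T : RTAS ℕ (G₁ ⊕ ℕ), DirectedTAS T ∧
      T.tiles.card
        = {g : ℕ → ℕ → Option (Tile BWG G₁) |
            ∃ x < C.w, ∃ y < C.h, g = superOpt C.L C.f x y}.ncard ∧
      SelfAssembles T C.w C.h C.P ∧
      ∀ x < C.w, ∀ y < C.h, ∃ t ∈ T.tiles,
        t.color = C.P x y ∧
        (1 ≤ x → 1 ≤ y →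
          t.south = Sum.inl (stS C.L C.f x y) ∧ t.west = Sum.inl (stW C.L C.f x y)) ∧
        (1 ≤ x → t.north = Sum.inl (stN C.L C.f x y)) ∧
        (1 ≤ y → t.east = Sum.inl (stE C.L C.f x y)) := by
  classical
  obtain ⟨hL, hk, hwL, hw2, hhL, hh2⟩ := C.basics
  set SF : Finset (ℕ → ℕ → Option (Tile BWG G₁)) :=
    (Finset.range C.w ×ˢ Finset.range C.h).image
      (fun p => superOpt C.L C.f p.1 p.2) with hSF
  have memSF : ∀ {x y : ℕ}, x < C.w → y < C.h → superOpt C.L C.f x y ∈ SF := by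
    intro x y hx hy
    exact Finset.mem_image.mpr ⟨(x, y), Finset.mem_product.mpr
      ⟨Finset.mem_range.mpr hx, Finset.mem_range.mpr hy⟩, rfl⟩
  set e : (ℕ → ℕ → Option (Tile BWG G₁)) → ℕ :=
    fun g => if h : g ∈ SF then ((SF.equivFin ⟨g, h⟩ : Fin SF.card) : ℕ) else 0 with he
  have e_eq : ∀ (g) (h : g ∈ SF), e g = ((SF.equivFin ⟨g, h⟩ : Fin SF.card) : ℕ) :=
    fun g h => dif_pos h
  have einj : ∀ g₁, g₁ ∈ SF → ∀ g₂, g₂ ∈ SF → e g₁ = e g₂ → g₁ = g₂ := by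
    intro g₁ h₁ g₂ h₂ hgg
    rw [e_eq g₁ h₁, e_eq g₂ h₂] at hgg
    have := SF.equivFin.injective (Fin.val_injective hgg)
    exact congrArg Subtype.val this
  -- the key uniqueness property
  have key : ∀ x₁ y₁ x₂ y₂ : ℕ, x₁ < C.w → y₁ < C.h → x₂ < C.w → y₂ < C.h →
      (mkTile C.L e (superOpt C.L C.f x₁ y₁)).south
        = (mkTile C.L e (superOpt C.L C.f x₂ y₂)).south →
      (mkTile C.L e (superOpt C.L C.f x₁ y₁)).west
        = (mkTile C.L e (superOpt C.L C.f x₂ y₂)).west →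
      superOpt C.L C.f x₁ y₁ = superOpt C.L C.f x₂ y₂ := by
    intro x₁ y₁ x₂ y₂ hx₁ hy₁ hx₂ hy₂ hSo hWe
    rcases Nat.eq_zero_or_pos x₁ with rfl | hx₁1
    · rcases Nat.eq_zero_or_pos x₂ with rfl | hx₂1
      · -- both in column 0 : the west markers decide
        rw [C.mk_west0, C.mk_west0] at hWe
        have : e (superOpt C.L C.f 0 y₁) = e (superOpt C.L C.f 0 y₂) := by
          injection hWe with hWe'; omega
        exact einj _ (memSF hx₁ hy₁) _ (memSF hx₂ hy₂) this
      · -- inl vs inr west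
        exfalso
        rw [C.mk_west0] at hWe
        rcases Nat.eq_zero_or_pos y₂ with rfl | hy₂1
        · rw [C.mk_west10 e hx₂1] at hWe; exact absurd hWe (by simp)
        · rw [C.mk_west11 e hx₂1 hy₂1] at hWe; exact absurd hWe (by simp)
    · rcases Nat.eq_zero_or_pos x₂ with rfl | hx₂1
      · exfalso
        rw [C.mk_west0] at hWe
        rcases Nat.eq_zero_or_pos y₁ with rfl | hy₁1
        · rw [C.mk_west10 e hx₁1] at hWe; exact absurd hWe (by simp)
        · rw [C.mk_west11 e hx₁1 hy₁1] at hWe; exact absurd hWe (by simp)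
      · rcases Nat.eq_zero_or_pos y₁ with rfl | hy₁1
        · rcases Nat.eq_zero_or_pos y₂ with rfl | hy₂1
          · -- both in row 0 : the south markers decide
            rw [C.mk_south10 e hx₁1, C.mk_south10 e hx₂1] at hSo
            have : e (superOpt C.L C.f x₁ 0) = e (superOpt C.L C.f x₂ 0) := by
              injection hSo with hSo'; omega
            exact einj _ (memSF hx₁ hy₁) _ (memSF hx₂ hy₂) this
          · exfalso
            rw [C.mk_south10 e hx₁1, C.mk_south11 e hx₂1 hy₂1] at hSo
            exact absurd hSo (by simp)
        · rcases Nat.eq_zero_or_pos y₂ with rfl | hy₂1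
          · exfalso
            rw [C.mk_south11 e hx₁1 hy₁1, C.mk_south10 e hx₂1] at hSo
            exact absurd hSo (by simp)
          · -- both complete : the CORE
            rw [C.mk_south11 e hx₁1 hy₁1, C.mk_south11 e hx₂1 hy₂1] at hSo
            rw [C.mk_west11 e hx₁1 hy₁1, C.mk_west11 e hx₂1 hy₂1] at hWe
            injection hSo with hSo'
            injection hWe with hWe'
            exact C.so_eq hx₁1 hx₁ hy₁1 hy₁ hx₂1 hx₂ hy₂1 hy₂ hSo' hWe'
  refine ⟨⟨SF.image (mkTile C.L e),
    fun X => (mkTile C.L e (superOpt C.L C.f X 0)).south,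
    fun Y => (mkTile C.L e (superOpt C.L C.f 0 Y)).west⟩, ?_, ?_, ?_, ?_⟩
  · -- directedness
    intro t₁ ht₁ t₂ ht₂ hne
    by_contra hcon
    push_neg at hcon
    obtain ⟨hSo, hWe⟩ := hcon
    obtain ⟨g₁, hg₁, rfl⟩ := Finset.mem_image.mp ht₁
    obtain ⟨g₂, hg₂, rfl⟩ := Finset.mem_image.mp ht₂
    obtain ⟨⟨x₁, y₁⟩, hp₁, rfl⟩ := Finset.mem_image.mp hg₁
    obtain ⟨⟨x₂, y₂⟩, hp₂, rfl⟩ := Finset.mem_image.mp hg₂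
    rw [Finset.mem_product, Finset.mem_range, Finset.mem_range] at hp₁ hp₂
    exact hne (congrArg (mkTile C.L e)
      (key x₁ y₁ x₂ y₂ hp₁.1 hp₁.2 hp₂.1 hp₂.2 hSo hWe))
  · -- cardinality
    show (SF.image (mkTile C.L e)).card = _
    have hset : {g : ℕ → ℕ → Option (Tile BWG G₁) |
        ∃ x < C.w, ∃ y < C.h, g = superOpt C.L C.f x y} = ↑SF := by
      ext g
      simp only [Set.mem_setOf_eq, Finset.coe_image, Set.mem_image, Finset.mem_coe,
        hSF, Finset.mem_image]
      constructor
      · rintro ⟨x, hx, y, hy, rfl⟩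
        exact ⟨(x, y), Finset.mem_product.mpr
          ⟨Finset.mem_range.mpr hx, Finset.mem_range.mpr hy⟩, rfl⟩
      · rintro ⟨⟨x, y⟩, hp, rfl⟩
        rw [Finset.mem_product, Finset.mem_range, Finset.mem_range] at hp
        exact ⟨x, hp.1, y, hp.2, rfl⟩
    rw [hset, Set.ncard_coe_finset]
    refine Finset.card_image_of_injOn ?_
    intro g₁ hg₁ g₂ hg₂ hgg
    simp only [Finset.mem_coe] at hg₁ hg₂
    obtain ⟨⟨x₁, y₁⟩, hp₁, rfl⟩ := Finset.mem_image.mp hg₁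
    obtain ⟨⟨x₂, y₂⟩, hp₂, rfl⟩ := Finset.mem_image.mp hg₂
    rw [Finset.mem_product, Finset.mem_range, Finset.mem_range] at hp₁ hp₂
    exact key x₁ y₁ x₂ y₂ hp₁.1 hp₁.2 hp₂.1 hp₂.2
      (congrArg Tile.south hgg) (congrArg Tile.west hgg)
  · -- self-assembly
    refine ⟨fun x y => mkTile C.L e (superOpt C.L C.f x y), ⟨?_, ?_, ?_, ?_, ?_⟩, ?_⟩
    · intro x hx y hy
      exact Finset.mem_image.mpr ⟨_, memSF hx hy, rfl⟩
    · intro y _; rfl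
    · intro x _; rfl
    · -- west matching
      intro x hx y hy
      rcases Nat.eq_zero_or_pos y with rfl | hy1
      · rw [C.mk_west10 e (by omega), C.mk_east0]
        have := C.hWadj (x * C.L + C.L - 2)
          (by rw [C.QWe]; have := C.mul_le (show x < C.w by omega); omega)
          0 (by rw [C.QHe]; omega)
        rw [show x * C.L + C.L - 2 + 1 = (x + 1) * C.L - 1 by
          rw [Nat.add_mul, Nat.one_mul]; omega] at this
        rw [this]
      · rw [C.mk_west11 e (by omega) hy1, C.mk_east1 e hy1]
        have := C.hWadj (x * C.L + C.L - 2)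
          (by rw [C.QWe]; have := C.mul_le (show x < C.w by omega); omega)
          (y * C.L - 1) (by rw [C.QHe]; have := C.mul_le hy; omega)
        rw [show x * C.L + C.L - 2 + 1 = (x + 1) * C.L - 1 by
          rw [Nat.add_mul, Nat.one_mul]; omega] at this
        rw [this]
    · -- south matching
      intro x hx y hy
      have hyL : (y + 1) * C.L = y * C.L + C.L := by rw [Nat.add_mul, Nat.one_mul]
      rcases Nat.eq_zero_or_pos x with rfl | hx1
      · rw [C.mk_south01 e (by omega), C.mk_north0]
        have := C.hSadj 0 (by rw [C.QWe]; omega)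
          (y * C.L + C.L - 2) (by rw [C.QHe]; have := C.mul_le (show y < C.h by omega); omega)
        rw [show y * C.L + C.L - 2 + 1 = (y + 1) * C.L - 1 by omega] at this
        rw [this]
      · rw [C.mk_south11 e hx1 (by omega), C.mk_north1 e hx1]
        have := C.hSadj (x * C.L - 1) (by rw [C.QWe]; have := C.mul_le hx; omega)
          (y * C.L + C.L - 2) (by rw [C.QHe]; have := C.mul_le (show y < C.h by omega); omega)
        rw [show y * C.L + C.L - 2 + 1 = (y + 1) * C.L - 1 by omega] at this
        rw [this]
    · intro x hx y hy
      exact C.colorOfg_eq hx hy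
  · -- the per-supertile witnesses
    intro x hx y hy
    refine ⟨mkTile C.L e (superOpt C.L C.f x y),
      Finset.mem_image.mpr ⟨_, memSF hx hy, rfl⟩, C.colorOfg_eq hx hy, ?_, ?_, ?_⟩
    · intro hx1 hy1
      exact ⟨C.mk_south11 e hx1 hy1, C.mk_west11 e hx1 hy1⟩
    · intro hx1
      exact C.mk_north1 e hx1
    · intro hy1
      exact C.mk_east1 e hy1

end Ctx
end STP
namespace STP

lemma InI_facts {k w h : ℕ} {P : ℕ → ℕ → ℕ} (hI : InI k w h P) :
    2 ≤ k ∧ 1 ≤ w ∧ 1 ≤ h ∧ (∀ x < w, ∀ y < h, 1 ≤ P x y) ∧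
      (∀ x < w, ∀ y < h, P x y ≤ k) ∧ ∃ x y, x < w ∧ y < h ∧ P x y = k := by
  obtain ⟨F, ρ, hwF, hh6, hbij, hPdef⟩ := hI
  have hw45 : 45 ≤ w := by rw [hwF]; simp only [widthF]; omega
  have hmemC : ∀ x < w, ∀ y < h, patF F x y ∈ colorsOf (widthF F) 6 (patF F) := by
    intro x hx y hy
    refine Finset.mem_image.mpr ⟨(x, y), Finset.mem_product.mpr ⟨?_, ?_⟩, rfl⟩
    · exact Finset.mem_range.mpr (by omega)
    · exact Finset.mem_range.mpr (by omega)
  have hrange : ∀ x < w, ∀ y < h, 1 ≤ P x y ∧ P x y ≤ k := by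
    intro x hx y hy
    have hm := hbij.mapsTo (Finset.mem_coe.mpr (hmemC x hx y hy))
    rw [Set.mem_Icc] at hm
    rw [hPdef x hx y hy]
    exact hm
  have hk2 : 2 ≤ k := by
    have h1 := hbij.mapsTo (Finset.mem_coe.mpr (hmemC 1 (by omega) 1 (by omega)))
    have h2 := hbij.mapsTo (Finset.mem_coe.mpr (hmemC 2 (by omega) 1 (by omega)))
    rw [Set.mem_Icc] at h1 h2
    have hne : ρ (patF F 1 1) ≠ ρ (patF F 2 1) := by
      intro hcon
      have := hbij.injOn (Finset.mem_coe.mpr (hmemC 1 (by omega) 1 (by omega)))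
        (Finset.mem_coe.mpr (hmemC 2 (by omega) 1 (by omega))) hcon
      rw [show patF F 1 1 = PColor.X 0 by simp [patF, blocksOf, place, pPat],
        show patF F 2 1 = PColor.orC by simp [patF, blocksOf, place, pPat]] at this
      exact PColor.noConfusion this
    omega
  refine ⟨hk2, by omega, by omega, fun x hx y hy => (hrange x hx y hy).1,
    fun x hx y hy => (hrange x hx y hy).2, ?_⟩
  have hkm : k ∈ Set.Icc 1 k := ⟨by omega, le_refl k⟩
  obtain ⟨c, hc, hck⟩ := hbij.surjOn hkm
  obtain ⟨⟨x, y⟩, hp, hcxy⟩ := Finset.mem_image.mp (Finset.mem_coe.mp hc)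
  rw [Finset.mem_product, Finset.mem_range, Finset.mem_range] at hp
  refine ⟨x, y, by omega, by omega, ?_⟩
  rw [hPdef x (by omega) y (by omega), hcxy, hck]

end STP
/-- From supertiles to tiles: if a DTAS `Θ` self-assembles `Q` using at most `m_b`
black and `m_g` gray tile types, and `S` is the set of distinct supertiles in the
tile assignment `Q_Θ`, then there is a DTAS `T` with `|S|` tile types which
self-assembles `P` such that for each supertile `s = Q_Θ⟨x, y⟩` there is a tile
type `t_s ∈ T` whose glues equal the corresponding supertile glues `s(N)`, `s(E)`,
`s(S)`, `s(W)` (the defined ones, for incomplete supertiles) and such that `s`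
portrays the color of `t_s`. -/
theorem tiles_of_supertiles {G₁ : Type} [DecidableEq G₁]
    (k w h ℓ : ℕ) (P : ℕ → ℕ → ℕ) (hI : InI k w h P) (hℓ : ℓ = 5 * k + 8)
    (Θ : RTAS BWG G₁) (hD : DirectedTAS Θ)
    (hb : countColor Θ BWG.black ≤ 1)
    (hg : countColor Θ BWG.gray ≤ 2 * k + 3)
    (f : ℕ → ℕ → Tile BWG G₁)
    (hf : IsAssignment Θ (QW k w) (QH k h) f)
    (hcol : ∀ X < QW k w, ∀ Y < QH k h, (f X Y).color = QPat k w h P X Y) :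
    ∃ T : RTAS ℕ (G₁ ⊕ ℕ), DirectedTAS T ∧
      T.tiles.card
        = {g : ℕ → ℕ → Option (Tile BWG G₁) |
            ∃ x < w, ∃ y < h, g = superOpt ℓ f x y}.ncard ∧
      SelfAssembles T w h P ∧
      ∀ x < w, ∀ y < h, ∃ t ∈ T.tiles,
        t.color = P x y ∧
        (1 ≤ x → 1 ≤ y →
          t.south = Sum.inl (stS ℓ f x y) ∧ t.west = Sum.inl (stW ℓ f x y)) ∧
        (1 ≤ x → t.north = Sum.inl (stN ℓ f x y)) ∧
        (1 ≤ y → t.east = Sum.inl (stE ℓ f x y)) := by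
  obtain ⟨hk2, hw1, hh1, hP1, hPk, hsurj⟩ := STP.InI_facts hI
  obtain ⟨hmem, hseedE, hseedN, hWadj, hSadj⟩ := hf
  subst hℓ
  exact STP.Ctx.final
    ⟨k, w, h, P, Θ, f, hD, hb, hg, hmem, hWadj, hSadj, hcol, hk2, hw1, hh1, hP1, hPk, hsurj⟩
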